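/- arXiv:2401.07116 — 6 statements merged into one kernel-verified Lean document; each statement's English description precedes it below -/
import Mathlib

section
/- Let A be a set of k ≥ 3 positive integers, let r be a positive integer, and let H be a set of t ≥ 2 positive integers with 1 ≤ r ≤ max(H) ≤ (k−1)r − 1. Then |H^{(r)}A| ≥ L(H, r, k). -/
/-!
Enumerate `A` as `a₀ < ⋯ < a_{k-1}`; an element of `h^{(r)}A` is `∑ c_j a_j` for a multiplicity
vector `c` with `c_j ≤ r` and `∑ c_j = h`. Moving one unit of multiplicity from position `j` to
`j + 1` strictly increases the sum and lowers the potential `∑_{p<k} (c_0 + ⋯ + c_{p-1})` by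
exactly one. The potential is minimal at the vector `topFill h` that fills the top positions
greedily, and as long as it is not minimal some unit can be moved. Starting from the vector that
fills `h_{i-1}` greedily from the top and `h_i - h_{i-1}` greedily from the bottom, and moving
units until the potential is minimal, gives `(potential difference) + 1` distinct elements of
`h_i^{(r)}A` in the interval `(σ(h_{i-1}), σ(h_i)]`, where `σ(h)` is the sum of `topFill h`.
These intervals are disjoint, and the potentials of greedy vectors are explicit quadratics in
`⌊h / r⌋`, which bound the number of elements of block `i` below by the `i`-th summand of
`L(H, r, k)`.
-/

/-- The generalized `h`-fold sumset `h^(r)A`: all sums of `h` elements of `A`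
where every summand appears at most `r` times. -/
def genSumset (r h : ℕ) (A : Finset ℤ) : Set ℤ :=
  {x | ∃ lam : ℤ → ℕ, (∀ a, lam a ≤ r) ∧ (∀ a ∉ A, lam a = 0) ∧
    (∑ a ∈ A, lam a) = h ∧ (∑ a ∈ A, (lam a : ℤ) * a) = x}

/-- The generalized `H`-fold sumset `H^(r)A = ⋃_{h ∈ H} h^(r)A`. -/
def HSumset (r : ℕ) (H : Finset ℕ) (A : Finset ℤ) : Set ℤ :=
  ⋃ h ∈ H, genSumset r h A

/-- The quantity `L(H, r, k)` where `H = {h 1 < h 2 < ⋯ < h t}`, `h 0 = 0`,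
`m_i = ⌊h_i / r⌋` and `ε_i = h_i mod r`. -/
def Lbound (r : ℕ) (h : ℕ → ℕ) (t k : ℕ) : ℤ :=
  ∑ i ∈ Finset.Icc 1 t,
    ((r : ℤ) * (((h i / r : ℕ) : ℤ) - ((h (i - 1) / r : ℕ) : ℤ)) * ((k : ℤ) - ((h i / r : ℕ) : ℤ))
      + (((h i % r : ℕ) : ℤ) - ((h (i - 1) % r : ℕ) : ℤ)) * ((k : ℤ) - ((h i / r : ℕ) : ℤ) - 1)
      - ((max (h i % r) (h (i - 1) % r) : ℕ) : ℤ)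
          * (((h i / r : ℕ) : ℤ) - ((h (i - 1) / r : ℕ) : ℤ))
      + 1)

open Finset

def prefixSum (c : ℕ → ℕ) (p : ℕ) : ℕ := ∑ j ∈ range p, c j

def potential (k : ℕ) (c : ℕ → ℕ) : ℕ := ∑ p ∈ range k, prefixSum c p

def weightedSum (a : ℕ → ℤ) (k : ℕ) (c : ℕ → ℕ) : ℤ := ∑ j ∈ range k, (c j : ℤ) * a j

def IsConfig (r k h : ℕ) (c : ℕ → ℕ) : Prop := (∀ j, c j ≤ r) ∧ prefixSum c k = h

def configSums (r k h : ℕ) (a : ℕ → ℤ) : Set ℤ :=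
  {x | ∃ c, IsConfig r k h c ∧ weightedSum a k c = x}

/-- `r` on each position `j < x / r`, the remainder `x % r` at `x / r`, and `0` beyond (by
truncated subtraction). -/
def lowFill (r x : ℕ) (j : ℕ) : ℕ := min r (x - r * j)

def topFill (r k x : ℕ) (j : ℕ) : ℕ := if j < k then lowFill r x (k - 1 - j) else 0

def Lterm (r k h' h : ℕ) : ℤ :=
  (r : ℤ) * (((h / r : ℕ) : ℤ) - ((h' / r : ℕ) : ℤ)) * ((k : ℤ) - ((h / r : ℕ) : ℤ))
    + (((h % r : ℕ) : ℤ) - ((h' % r : ℕ) : ℤ)) * ((k : ℤ) - ((h / r : ℕ) : ℤ) - 1)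
    - ((max (h % r) (h' % r) : ℕ) : ℤ) * (((h / r : ℕ) : ℤ) - ((h' / r : ℕ) : ℤ))
    + 1

def chainCount (r k h' h : ℕ) : ℤ :=
  potential k (lowFill r (h - h')) + potential k (topFill r k h') - potential k (topFill r k h) + 1

lemma Nat.exists_adjacent_of_forall_or {P Q : ℕ → Prop} (hPQ : ∀ j, P j ∨ Q j) {i q : ℕ}
    (hi : P i) (hq : Q q) (hiq : i < q) : ∃ j < q, P j ∧ Q (j + 1) := by
  induction q, hiq using Nat.le_induction with
  | base => exact ⟨i, i.lt_succ_self, hi, hq⟩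
  | succ q hiq ih =>
    rcases hPQ q with hPq | hQq
    · exact ⟨q, q.lt_succ_self, hPq, hq⟩
    · obtain ⟨j, hjq, hj⟩ := ih hQq
      exact ⟨j, hjq.trans q.lt_succ_self, hj⟩

lemma Nat.le_mul_of_le_pred_mul {h k r : ℕ} (hh : h ≤ (k - 1) * r) : h ≤ r * k :=
  hh.trans ((Nat.mul_le_mul_right r (Nat.sub_le k 1)).trans_eq (mul_comm k r))

lemma Nat.mul_add_div_mod_of_lt {r ε : ℕ} (m : ℕ) (hε : ε < r) :
    (m * r + ε) / r = m ∧ (m * r + ε) % r = ε :=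
  ⟨by rw [add_comm, Nat.add_mul_div_right _ _ (by omega), Nat.div_eq_of_lt hε, zero_add],
    by simp [Nat.mod_eq_of_lt hε]⟩

section Configurations

variable {r k h : ℕ}

@[simp]
lemma prefixSum_zero (c : ℕ → ℕ) : prefixSum c 0 = 0 := sum_range_zero c

lemma prefixSum_succ (c : ℕ → ℕ) (p : ℕ) : prefixSum c (p + 1) = prefixSum c p + c p :=
  sum_range_succ c p

lemma prefixSum_add (c d : ℕ → ℕ) (p : ℕ) :
    prefixSum (c + d) p = prefixSum c p + prefixSum d p :=
  sum_add_distrib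

lemma prefixSum_single (i p : ℕ) : prefixSum (Pi.single i 1) p = if i < p then 1 else 0 := by
  simp [prefixSum, sum_pi_single']

lemma potential_add (k : ℕ) (c d : ℕ → ℕ) :
    potential k (c + d) = potential k c + potential k d := by
  simp only [potential, prefixSum_add, sum_add_distrib]

lemma potential_single_succ {i : ℕ} (hi : i + 1 < k) :
    potential k (Pi.single (i + 1) 1) + 1 = potential k (Pi.single i 1) := by
  have hsplit (p : ℕ) : (if i < p then 1 else 0) =
      (if i + 1 < p then 1 else 0) + (if p = i + 1 then 1 else 0) := by
    split_ifs <;> omega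
  simp only [potential, prefixSum_single, hsplit, sum_add_distrib, sum_ite_eq', mem_range,
    if_pos hi]

lemma weightedSum_add (a : ℕ → ℤ) (k : ℕ) (c d : ℕ → ℕ) :
    weightedSum a k (c + d) = weightedSum a k c + weightedSum a k d := by
  simp only [weightedSum, ← sum_add_distrib, Pi.add_apply, Nat.cast_add, add_mul]

lemma weightedSum_single (a : ℕ → ℤ) {i : ℕ} (hi : i < k) :
    weightedSum a k (Pi.single i 1) = a i := by
  simp [weightedSum, Pi.single_apply, hi]

lemma prefixSum_le_weightedSum {a : ℕ → ℤ} (hpos : ∀ j < k, 0 < a j) (c : ℕ → ℕ) :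
    (prefixSum c k : ℤ) ≤ weightedSum a k c := by
  rw [prefixSum, Nat.cast_sum]
  exact sum_le_sum fun j hj => le_mul_of_one_le_right (Nat.cast_nonneg _) (hpos j (mem_range.1 hj))

lemma lowFill_le (r x j : ℕ) : lowFill r x j ≤ r := min_le_left _ _

lemma topFill_le (r k x j : ℕ) : topFill r k x j ≤ r := by
  unfold topFill
  split_ifs
  exacts [lowFill_le r x _, Nat.zero_le r]

lemma prefixSum_lowFill (r x p : ℕ) : prefixSum (lowFill r x) p = min x (r * p) := by
  induction p with
  | zero => simp
  | succ p ih =>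
    rw [prefixSum_succ, ih, lowFill, Nat.mul_succ]
    omega

lemma prefixSum_lowFill_of_le {x p : ℕ} (hx : x ≤ r * p) : prefixSum (lowFill r x) p = x := by
  rw [prefixSum_lowFill, min_eq_left hx]

lemma prefixSum_topFill_add (r x : ℕ) {p : ℕ} (hp : p ≤ k) :
    prefixSum (topFill r k x) p + prefixSum (lowFill r x) (k - p) = prefixSum (lowFill r x) k := by
  induction p with
  | zero => simp
  | succ p ih =>
    have hkp : k - p = k - (p + 1) + 1 := by omega
    rw [prefixSum_succ, ← ih (by omega), hkp, prefixSum_succ, topFill, if_pos (by omega),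
      show k - 1 - p = k - (p + 1) by omega]
    ring

lemma prefixSum_topFill_add_min {p : ℕ} (hh : h ≤ r * k) (hp : p ≤ k) :
    prefixSum (topFill r k h) p + min h (r * (k - p)) = h := by
  rw [← prefixSum_lowFill, prefixSum_topFill_add r h hp, prefixSum_lowFill_of_le hh]

lemma potential_topFill_add (r k x : ℕ) :
    potential k (topFill r k x) + (potential k (lowFill r x) + prefixSum (lowFill r x) k) =
      k * prefixSum (lowFill r x) k := by
  have reflect : potential k (lowFill r x) + prefixSum (lowFill r x) k =
      ∑ p ∈ range k, prefixSum (lowFill r x) (k - p) := by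
    have shift := sum_range_succ' (prefixSum (lowFill r x)) k
    rw [sum_range_succ, prefixSum_zero, add_zero] at shift
    rw [potential, shift, ← sum_range_reflect]
    refine sum_congr rfl fun p hp => ?_
    rw [show k - 1 - p + 1 = k - p by have := mem_range.1 hp; omega]
  rw [reflect, potential, ← sum_add_distrib,
    sum_congr rfl fun p hp => prefixSum_topFill_add r x (mem_range.1 hp).le]
  simp

lemma isConfig_topFill (hh : h ≤ r * k) : IsConfig r k h (topFill r k h) :=
  ⟨topFill_le r k h, by simpa using prefixSum_topFill_add_min hh le_rfl⟩

lemma sum_Ico_le_of_le {c : ℕ → ℕ} (hc : ∀ j, c j ≤ r) (p k : ℕ) :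
    ∑ j ∈ Ico p k, c j ≤ r * (k - p) :=
  (sum_le_card_nsmul _ _ r fun j _ => hc j).trans_eq (by simp [mul_comm])

lemma IsConfig.prefixSum_add_sum_Ico {c : ℕ → ℕ} (hc : IsConfig r k h c) {p : ℕ} (hp : p ≤ k) :
    prefixSum c p + ∑ j ∈ Ico p k, c j = h :=
  (sum_range_add_sum_Ico c hp).trans hc.2

lemma IsConfig.prefixSum_topFill_le {c : ℕ → ℕ} (hc : IsConfig r k h c) (hh : h ≤ r * k)
    {p : ℕ} (hp : p ≤ k) : prefixSum (topFill r k h) p ≤ prefixSum c p := by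
  have := prefixSum_topFill_add_min hh hp
  have := hc.prefixSum_add_sum_Ico hp
  have := sum_Ico_le_of_le hc.1 p k
  omega

lemma IsConfig.potential_topFill_le {c : ℕ → ℕ} (hc : IsConfig r k h c) (hh : h ≤ r * k) :
    potential k (topFill r k h) ≤ potential k c :=
  sum_le_sum fun _ hp => hc.prefixSum_topFill_le hh (mem_range.1 hp).le

lemma eqOn_of_prefixSum_eq {c d : ℕ → ℕ} (hcd : ∀ p ≤ k, prefixSum c p = prefixSum d p) :
    ∀ j < k, c j = d j := by
  intro j hj
  have := hcd j hj.le
  have := hcd (j + 1) hj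
  rw [prefixSum_succ, prefixSum_succ] at this
  omega

lemma IsConfig.weightedSum_eq_of_potential_eq {c : ℕ → ℕ} (hc : IsConfig r k h c)
    (hh : h ≤ r * k) (a : ℕ → ℤ) (hpot : potential k c = potential k (topFill r k h)) :
    weightedSum a k c = weightedSum a k (topFill r k h) := by
  have hlt : ∀ p < k, prefixSum c p = prefixSum (topFill r k h) p := by
    have := (sum_eq_sum_iff_of_le fun p hp => hc.prefixSum_topFill_le hh (mem_range.1 hp).le).1
      hpot.symm
    exact fun p hp => (this p (mem_range.2 hp)).symm
  have hk : prefixSum c k = prefixSum (topFill r k h) k := hc.2.trans (isConfig_topFill hh).2.symm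
  have hcd := eqOn_of_prefixSum_eq fun p hp => (Nat.lt_or_eq_of_le hp).elim (hlt p) (· ▸ hk)
  exact sum_congr rfl fun j hj => by rw [hcd j (mem_range.1 hj)]

lemma IsConfig.exists_movable {c : ℕ → ℕ} (hc : IsConfig r k h c) (hh : h ≤ r * k)
    (hlt : potential k (topFill r k h) < potential k c) :
    ∃ i, i + 1 < k ∧ 0 < c i ∧ c (i + 1) < r := by
  obtain ⟨p, hp, hltp⟩ := exists_lt_of_sum_lt hlt
  have hpk := (mem_range.1 hp).le
  obtain ⟨i, hi, hci⟩ : ∃ i ∈ range p, c i ≠ 0 :=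
    exists_ne_zero_of_sum_ne_zero (Nat.ne_zero_of_lt hltp)
  obtain ⟨q, hq, hcq⟩ : ∃ q ∈ Ico p k, c q < r := by
    refine exists_lt_of_sum_lt ?_
    have := prefixSum_topFill_add_min hh hpk
    have := hc.prefixSum_add_sum_Ico hpk
    rw [sum_const, Nat.card_Ico, smul_eq_mul, mul_comm]
    omega
  rw [mem_range] at hi
  rw [mem_Ico] at hq
  obtain ⟨j, hjq, hj⟩ := Nat.exists_adjacent_of_forall_or (P := fun j => 0 < c j)
    (Q := fun j => c j < r) (fun j => by have := hc.1 i; have := hc.1 j; omega)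
    (Nat.pos_of_ne_zero hci) hcq (by omega)
  exact ⟨j, by omega, hj⟩

lemma IsConfig.exists_move {c : ℕ → ℕ} (hc : IsConfig r k h c) {i : ℕ} (hi : i + 1 < k)
    (hci : 0 < c i) (hci1 : c (i + 1) < r) :
    ∃ d : ℕ → ℕ, c = d + Pi.single i 1 ∧ IsConfig r k h (d + Pi.single (i + 1) 1) := by
  set d := c - Pi.single i 1
  have hcd : c = d + Pi.single i 1 := by
    ext j
    by_cases hj : j = i
    · subst hj
      simp only [d, Pi.add_apply, Pi.sub_apply, Pi.single_eq_same]
      omega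
    · simp [d, hj]
  refine ⟨d, hcd, fun j => ?_, ?_⟩
  · have := hc.1 j
    simp only [d, Pi.add_apply, Pi.sub_apply, Pi.single_apply]
    split_ifs <;> subst_vars <;> omega
  · have htot := hc.2
    rw [hcd, prefixSum_add, prefixSum_single, if_pos (by omega)] at htot
    rw [prefixSum_add, prefixSum_single, if_pos hi, htot]

theorem IsConfig.exists_finset_configSums_Icc {c : ℕ → ℕ} (hc : IsConfig r k h c) {a : ℕ → ℤ}
    (ha : StrictMonoOn a (Set.Iio k)) (hh : h ≤ r * k) {n : ℕ}
    (hpot : potential k c = potential k (topFill r k h) + n) :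
    ∃ S : Finset ℤ, #S = n + 1 ∧ (S : Set ℤ) ⊆ configSums r k h a ∩
      Set.Icc (weightedSum a k c) (weightedSum a k (topFill r k h)) := by
  induction n generalizing c with
  | zero =>
    refine ⟨{weightedSum a k c}, card_singleton _, ?_⟩
    rw [coe_singleton, Set.singleton_subset_iff]
    exact ⟨⟨c, hc, rfl⟩, le_rfl, (hc.weightedSum_eq_of_potential_eq hh a hpot).le⟩
  | succ n ih =>
    obtain ⟨i, hi, hci, hci1⟩ := hc.exists_movable hh (by omega)
    obtain ⟨d, rfl, hc'⟩ := hc.exists_move hi hci hci1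
    have hpot' : potential k (d + Pi.single (i + 1) 1) = potential k (topFill r k h) + n := by
      have := potential_single_succ (k := k) hi
      rw [potential_add] at hpot ⊢
      omega
    have hlt : weightedSum a k (d + Pi.single i 1) <
        weightedSum a k (d + Pi.single (i + 1) 1) := by
      rw [weightedSum_add, weightedSum_add, weightedSum_single a (by omega),
        weightedSum_single a hi]
      exact (add_lt_add_iff_left _).2
        (ha (Set.mem_Iio.2 (by omega)) (Set.mem_Iio.2 hi) i.lt_succ_self)
    obtain ⟨S, hcard, hS⟩ := ih hc' hpot'
    have hnot : weightedSum a k (d + Pi.single i 1) ∉ S := fun hmem => (hS hmem).2.1.not_gt hlt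
    obtain ⟨y, hy⟩ := card_pos.1 (by omega : 0 < #S)
    refine ⟨insert _ S, by rw [card_insert_of_notMem hnot, hcard], ?_⟩
    rw [coe_insert, Set.insert_subset_iff]
    refine ⟨⟨⟨_, hc, rfl⟩, le_rfl, hlt.le.trans ((hS hy).2.1.trans (hS hy).2.2)⟩, hS.trans ?_⟩
    exact Set.inter_subset_inter_right _ (Set.Icc_subset_Icc_left hlt.le)

end Configurations

section ChainCount

variable {r k m ε m' ε' : ℕ}

lemma two_mul_potential_lowFill (hε : ε < r) (hm : m < k) :
    (2 * potential k (lowFill r (m * r + ε)) : ℤ) =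
      r * m * (m + 1) + 2 * (m * r + ε) * (k - 1 - m) := by
  have hlow : ∑ p ∈ range (m + 1), prefixSum (lowFill r (m * r + ε)) p =
      r * ∑ p ∈ range (m + 1), p := by
    rw [mul_sum]
    refine sum_congr rfl fun p hp => (prefixSum_lowFill r _ p).trans (min_eq_right ?_)
    have := Nat.mul_le_mul_left r (Nat.lt_succ_iff.1 (mem_range.1 hp))
    rw [mul_comm r m] at this
    omega
  have hhigh : ∑ p ∈ Ico (m + 1) k, prefixSum (lowFill r (m * r + ε)) p =
      ∑ _p ∈ Ico (m + 1) k, (m * r + ε) := by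
    refine sum_congr rfl fun p hp => prefixSum_lowFill_of_le ?_
    have := Nat.mul_le_mul_left r (mem_Ico.1 hp).1
    rw [Nat.mul_succ, mul_comm r m] at this
    omega
  have gauss := congrArg (Nat.cast : ℕ → ℤ) (sum_range_id_mul_two (m + 1))
  rw [potential, ← sum_range_add_sum_Ico _ (show m + 1 ≤ k by omega), hlow, hhigh]
  simp only [sum_const, Nat.card_Ico, smul_eq_mul, Nat.add_sub_cancel] at gauss ⊢
  push_cast [Nat.cast_sub (show m + 1 ≤ k by omega)] at gauss ⊢
  linear_combination (r : ℤ) * gauss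

lemma two_mul_potential_topFill (hε : ε < r) (hm : m < k) :
    (2 * potential k (topFill r k (m * r + ε)) : ℤ) =
      2 * (k - 1) * (m * r + ε) - (r * m * (m + 1) + 2 * (m * r + ε) * (k - 1 - m)) := by
  have hx : m * r + ε ≤ r * k := by
    have := Nat.mul_le_mul_right r hm
    rw [Nat.succ_mul, mul_comm k] at this
    omega
  have := potential_topFill_add r k (m * r + ε)
  rw [prefixSum_lowFill_of_le hx] at this
  rw [← two_mul_potential_lowFill hε hm]
  zify at this
  linear_combination 2 * this

lemma Lterm_le_chainCount_of_mod_le (hε : ε < r) (hle : ε' ≤ ε) (hmm : m' ≤ m) (hmk : m < k) :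
    Lterm r k (m' * r + ε') (m * r + ε) ≤ chainCount r k (m' * r + ε') (m * r + ε) := by
  have hε' := hε.trans_le' hle
  have hδ : m * r + ε - (m' * r + ε') = (m - m') * r + (ε - ε') := by
    have := Nat.mul_le_mul_right r hmm
    rw [Nat.sub_mul]
    omega
  have low := two_mul_potential_lowFill (k := k) (show ε - ε' < r by omega)
    (show m - m' < k by omega)
  have top := two_mul_potential_topFill hε hmk
  have top' := two_mul_potential_topFill hε' (hmm.trans_lt hmk)
  rw [Lterm, chainCount, (Nat.mul_add_div_mod_of_lt m hε).1, (Nat.mul_add_div_mod_of_lt m hε).2,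
    (Nat.mul_add_div_mod_of_lt m' hε').1, (Nat.mul_add_div_mod_of_lt m' hε').2, max_eq_left hle, hδ]
  push_cast [Nat.cast_sub hmm, Nat.cast_sub hle] at low ⊢
  linarith

lemma Lterm_le_chainCount_of_mod_lt (hε' : ε' < r) (hlt : ε < ε') (hmm : m' < m) (hmk : m < k) :
    Lterm r k (m' * r + ε') (m * r + ε) ≤ chainCount r k (m' * r + ε') (m * r + ε) := by
  have hε := hlt.trans hε'
  have hδ : m * r + ε - (m' * r + ε') = (m - m' - 1) * r + (r - (ε' - ε)) := by
    have := Nat.mul_le_mul_right r hmm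
    rw [Nat.sub_mul, Nat.sub_mul, one_mul]
    rw [Nat.succ_mul] at this
    omega
  have low := two_mul_potential_lowFill (k := k) (show r - (ε' - ε) < r by omega)
    (show m - m' - 1 < k by omega)
  have top := two_mul_potential_topFill hε hmk
  have top' := two_mul_potential_topFill hε' (hmm.trans hmk)
  have slack : (0 : ℤ) ≤ ((ε' : ℤ) - ε) * ((m : ℤ) - m' - 1) := mul_nonneg (by omega) (by omega)
  rw [Lterm, chainCount, (Nat.mul_add_div_mod_of_lt m hε).1, (Nat.mul_add_div_mod_of_lt m hε).2,
    (Nat.mul_add_div_mod_of_lt m' hε').1, (Nat.mul_add_div_mod_of_lt m' hε').2,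
    max_eq_right hlt.le, hδ]
  push_cast [Nat.cast_sub hmm.le, Nat.cast_sub hlt.le, Nat.cast_sub (show ε' - ε ≤ r by omega),
    Nat.cast_sub (show 1 ≤ m - m' by omega)] at low ⊢
  linarith

end ChainCount

lemma Lterm_le_chainCount {r k h' h : ℕ} (hlt : h' < h) (hh : h < (k - 1) * r) :
    Lterm r k h' h ≤ chainCount r k h' h := by
  have hr : 0 < r := Nat.pos_of_ne_zero fun hr => by simp [hr] at hh
  obtain ⟨m, ε, hε, rfl⟩ : ∃ m ε, ε < r ∧ h = m * r + ε :=
    ⟨_, _, Nat.mod_lt h hr, (Nat.div_add_mod' h r).symm⟩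
  obtain ⟨m', ε', hε', rfl⟩ : ∃ m ε, ε < r ∧ h' = m * r + ε :=
    ⟨_, _, Nat.mod_lt h' hr, (Nat.div_add_mod' h' r).symm⟩
  have hmk : m < k := by
    by_contra hcon
    have := Nat.mul_le_mul_right r (not_lt.1 hcon)
    have := Nat.mul_le_mul_right r (Nat.sub_le k 1)
    omega
  have hmm : m' ≤ m := by
    by_contra hcon
    have := Nat.mul_le_mul_right r (not_le.1 hcon)
    rw [Nat.succ_mul] at this
    omega
  rcases le_or_gt ε' ε with hle | hlt'
  · exact Lterm_le_chainCount_of_mod_le hε hle hmm hmk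
  · refine Lterm_le_chainCount_of_mod_lt hε' hlt' (lt_of_le_of_ne hmm fun he => ?_) hmk
    subst he
    omega

section Block

variable {r k h' h : ℕ}

lemma isConfig_lowFill_add_topFill (hle : h' ≤ h) (hh : h ≤ (k - 1) * r) :
    IsConfig r k h (lowFill r (h - h') + topFill r k h') := by
  have hk := Nat.le_mul_of_le_pred_mul hh
  refine ⟨fun j => ?_, ?_⟩
  · rw [Pi.add_apply]
    by_cases hj : h - h' ≤ r * j
    · rw [lowFill, Nat.sub_eq_zero_of_le hj, Nat.min_zero, zero_add]
      exact topFill_le r k h' j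
    · have hjk : j < k - 1 := by
        by_contra hcon
        have := Nat.mul_le_mul_left r (not_lt.1 hcon)
        rw [mul_comm r (k - 1)] at this
        omega
      have hfree : lowFill r h' (k - 1 - j) = 0 := by
        rw [lowFill, Nat.sub_eq_zero_of_le, Nat.min_zero]
        rw [Nat.mul_sub, mul_comm r (k - 1)]
        omega
      rw [topFill, if_pos (by omega), hfree, add_zero]
      exact lowFill_le r _ j
  · rw [prefixSum_add, prefixSum_lowFill_of_le (by omega), (isConfig_topFill (by omega)).2]
    omega

theorem exists_finset_configSums_Ioc {a : ℕ → ℤ} (ha : StrictMonoOn a (Set.Iio k))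
    (hpos : ∀ j < k, 0 < a j) (hlt : h' < h) (hh : h < (k - 1) * r) :
    ∃ S : Finset ℤ, Lterm r k h' h ≤ #S ∧ (S : Set ℤ) ⊆ configSums r k h a ∩
      Set.Ioc (weightedSum a k (topFill r k h')) (weightedSum a k (topFill r k h)) := by
  have hk := Nat.le_mul_of_le_pred_mul hh.le
  have hc := isConfig_lowFill_add_topFill hlt.le hh.le
  have hle := hc.potential_topFill_le hk
  obtain ⟨S, hcard, hS⟩ := hc.exists_finset_configSums_Icc ha hk (Nat.add_sub_of_le hle).symm
  have hlow : weightedSum a k (topFill r k h') <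
      weightedSum a k (lowFill r (h - h') + topFill r k h') := by
    have := prefixSum_le_weightedSum hpos (lowFill r (h - h'))
    rw [prefixSum_lowFill_of_le (by omega)] at this
    rw [weightedSum_add]
    omega
  refine ⟨S, (Lterm_le_chainCount hlt hh).trans_eq ?_,
    hS.trans fun x hx => ⟨hx.1, hlow.trans_le hx.2.1, hx.2.2⟩⟩
  rw [potential_add] at hle
  rw [hcard, chainCount, potential_add]
  push_cast [Nat.cast_sub hle]
  ring

end Block

lemma weightedSum_topFill_mono {r k x y : ℕ} {a : ℕ → ℤ} (hpos : ∀ j < k, 0 ≤ a j)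
    (hxy : x ≤ y) : weightedSum a k (topFill r k x) ≤ weightedSum a k (topFill r k y) := by
  refine sum_le_sum fun j hj => mul_le_mul_of_nonneg_right ?_ (hpos j (mem_range.1 hj))
  simp only [topFill, lowFill, if_pos (mem_range.1 hj)]
  exact_mod_cast min_le_min_left r (Nat.sub_le_sub_right hxy _)

lemma exists_finset_sum_le_card_of_blocks {α : Type*} [Preorder α] [DecidableEq α] {P : Set α}
    {W : ℕ → α} {L : ℕ → ℤ} {t : ℕ} (hW : ∀ i < t, W i ≤ W (i + 1))
    (hblock : ∀ i < t, ∃ S : Finset α, L i ≤ #S ∧ (S : Set α) ⊆ P ∩ Set.Ioc (W i) (W (i + 1))) :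
    ∃ T : Finset α, ∑ i ∈ range t, L i ≤ #T ∧ (T : Set α) ⊆ P ∩ Set.Iic (W t) := by
  induction t with
  | zero => exact ⟨∅, by simp, by simp⟩
  | succ t ih =>
    obtain ⟨T, hT, hTP⟩ := ih (fun i hi => hW i (by omega)) (fun i hi => hblock i (by omega))
    obtain ⟨S, hS, hSP⟩ := hblock t t.lt_succ_self
    have hdisj : Disjoint T S :=
      disjoint_left.2 fun x hxT hxS => (hSP hxS).2.1.not_ge (hTP hxT).2
    refine ⟨T ∪ S, ?_, ?_⟩
    · rw [sum_range_succ, card_union_of_disjoint hdisj]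
      push_cast
      linarith
    · rw [coe_union, Set.union_subset_iff]
      exact ⟨fun x hx => ⟨(hTP hx).1, (hTP hx).2.trans (hW t t.lt_succ_self)⟩,
        fun x hx => ⟨(hSP hx).1, (hSP hx).2.2⟩⟩

lemma Finset.exists_strictMonoOn_image_range {α : Type*} [LinearOrder α] [Inhabited α]
    (A : Finset α) : ∃ a : ℕ → α, StrictMonoOn a (Set.Iio #A) ∧ (range #A).image a = A := by
  set a : ℕ → α := fun j => if hj : j < #A then A.orderEmbOfFin rfl ⟨j, hj⟩ else default
  have ha : StrictMonoOn a (Set.Iio #A) := fun i hi j hj hij => by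
    simp only [a, dif_pos (Set.mem_Iio.1 hi), dif_pos (Set.mem_Iio.1 hj)]
    exact (A.orderEmbOfFin rfl).strictMono hij
  refine ⟨a, ha, eq_of_subset_of_card_le (fun x hx => ?_) ?_⟩
  · obtain ⟨j, hj, rfl⟩ := mem_image.1 hx
    simp only [a, dif_pos (mem_range.1 hj)]
    exact orderEmbOfFin_mem A rfl _
  · rw [card_image_of_injOn (by rw [coe_range]; exact ha.injOn), card_range]

lemma configSums_subset_genSumset {r k h : ℕ} {a : ℕ → ℤ} {A : Finset ℤ}
    (ha : Set.InjOn a (Set.Iio k)) (hA : (range k).image a = A) :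
    configSums r k h a ⊆ genSumset r h A := by
  rintro _ ⟨c, ⟨hcr, hch⟩, rfl⟩
  set lam : ℤ → ℕ := fun x => if x ∈ A then c (Function.invFunOn a (Set.Iio k) x) else 0
  have hlam : ∀ j ∈ range k, lam (a j) = c j := fun j hj => by
    simp only [lam, if_pos (hA ▸ mem_image_of_mem a hj)]
    rw [ha.leftInvOn_invFunOn (by simpa using hj)]
  have hsum {M : Type} [AddCommMonoid M] (f : ℤ → M) :
      ∑ x ∈ A, f x = ∑ j ∈ range k, f (a j) := by
    rw [← hA, sum_image (by rwa [coe_range])]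
  refine ⟨lam, fun x => ?_, fun x hx => if_neg hx, ?_, ?_⟩
  · simp only [lam]
    split_ifs
    exacts [hcr _, Nat.zero_le r]
  · rw [hsum, sum_congr rfl hlam]
    exact hch
  · rw [hsum, weightedSum]
    exact sum_congr rfl fun j hj => by rw [hlam j hj]

lemma genSumset_finite (r h : ℕ) (A : Finset ℤ) : (genSumset r h A).Finite := by
  refine (Set.finite_range fun f : A → Fin (r + 1) => ∑ x : A, ((f x : ℕ) : ℤ) * x).subset ?_
  rintro _ ⟨lam, hle, -, -, rfl⟩
  exact ⟨fun x => ⟨lam x, Nat.lt_succ_of_le (hle x)⟩, sum_coe_sort A fun x => (lam x : ℤ) * x⟩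

lemma HSumset_finite (r : ℕ) (H : Finset ℕ) (A : Finset ℤ) : (HSumset r H A).Finite :=
  H.finite_toSet.biUnion fun h _ => genSumset_finite r h A

lemma Lbound_eq_sum_range (r t k : ℕ) (h : ℕ → ℕ) :
    Lbound r h t k = ∑ i ∈ range t, Lterm r k (h i) (h (i + 1)) := by
  have := sum_Ico_add' (fun i => Lterm r k (h (i - 1)) (h i)) 0 t 1
  simp only [Nat.add_sub_cancel, zero_add, Ico_add_one_right_eq_Icc] at this
  rw [range_eq_Ico, this]
  rfl

theorem stmt_0_general (k t r : ℕ) (A : Finset ℤ) (H : Finset ℕ) (h : ℕ → ℕ)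
    (hAcard : A.card = k) (hApos : ∀ a ∈ A, 0 < a)
    (h0 : h 0 = 0) (hmono : StrictMonoOn h (Set.Icc 0 t))
    (hHim : H = (Finset.Icc 1 t).image h)
    (hmax : h t ≤ (k - 1) * r - 1) :
    Lbound r h t k ≤ ((HSumset r H A).ncard : ℤ) := by
  obtain ⟨a, ha, hA⟩ := A.exists_strictMonoOn_image_range
  rw [hAcard] at ha hA
  have hpos : ∀ j < k, 0 < a j := fun j hj => hApos _ (hA ▸ mem_image_of_mem a (mem_range.2 hj))
  have hstep : ∀ i < t, h i < h (i + 1) := fun i hi =>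
    hmono ⟨i.zero_le, by omega⟩ ⟨(i + 1).zero_le, hi⟩ i.lt_succ_self
  have hbound : ∀ i < t, h (i + 1) < (k - 1) * r := fun i hi => by
    have := hmono.monotoneOn ⟨(i + 1).zero_le, hi⟩ ⟨t.zero_le, le_rfl⟩ hi
    have := hmono ⟨le_rfl, t.zero_le⟩ ⟨(i + 1).zero_le, hi⟩ i.succ_pos
    omega
  obtain ⟨T, hT, hTsub⟩ := exists_finset_sum_le_card_of_blocks (P := HSumset r H A)
    (L := fun i => Lterm r k (h i) (h (i + 1)))
    (fun i hi => weightedSum_topFill_mono (fun j hj => (hpos j hj).le) (hstep i hi).le)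
    fun i hi => by
      obtain ⟨S, hS, hSsub⟩ := exists_finset_configSums_Ioc ha hpos (hstep i hi) (hbound i hi)
      refine ⟨S, hS, fun x hx => ⟨?_, (hSsub hx).2⟩⟩
      exact Set.mem_biUnion (hHim ▸ mem_image_of_mem h (mem_Icc.2 ⟨by omega, hi⟩))
        (configSums_subset_genSumset ha.injOn hA (hSsub hx).1)
  rw [Lbound_eq_sum_range]
  calc _ ≤ (#T : ℤ) := hT
    _ ≤ _ := by
      rw [← Set.ncard_coe_finset]
      exact_mod_cast Set.ncard_le_ncard (fun x hx => (hTsub hx).1) (HSumset_finite r H A)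

theorem stmt_0 (k t r : ℕ) (A : Finset ℤ) (H : Finset ℕ) (h : ℕ → ℕ)
    (hk : 3 ≤ k) (hAcard : A.card = k) (hApos : ∀ a ∈ A, 0 < a)
    (ht : 2 ≤ t) (hHcard : H.card = t) (hHpos : ∀ x ∈ H, 0 < x)
    (h0 : h 0 = 0) (hmono : StrictMonoOn h (Set.Icc 0 t))
    (hHim : H = (Finset.Icc 1 t).image h)
    (hr1 : 1 ≤ r) (hrmax : r ≤ h t) (hmax : h t ≤ (k - 1) * r - 1) :
    Lbound r h t k ≤ ((HSumset r H A).ncard : ℤ) :=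
  stmt_0_general k t r A H h hAcard hApos h0 hmono hHim hmax
end

section
/- Let A be a set of k ≥ 3 positive integers, let r be a positive integer, and let H = {h_1, …, h_t} be a set of t ≥ 1 positive integers with (k−1)r ≤ h_1 < h_2 < ⋯ < h_t ≤ kr. Then |H^{(r)}A| ≥ m_1·r·(k − m_1) + (h_1 − m_1·r)·(k − 2m_1 − 1) + t, where m_1 = ⌊h_1/r⌋. -/
/-!
Put `d = kr - h₁ ≤ r`. Complementing multiplicities, `λ ↦ r - λ`, sends `n^{(r)}A` into
`rΣA - (kr - n)^{(r)}A`, and since `d ≤ r` the restricted sumset `d^{(r)}A` contains the ordinary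
sumset `dA`, which has at least `(k - 1)d + 1` elements by Cauchy–Davenport. Hence `h₁^{(r)}A` has
at least `(k - 1)d + 1` elements, all at most `rΣA - d·min A`, and every further `h_j` contributes
the larger element `rΣA - (kr - h_j)·min A`. For `(k - 1)r ≤ h₁ ≤ kr` the stated bound is exactly
`(k - 1)d + t`.
-/

open Finset Pointwise

theorem mul_card_sub_one_add_one_le_card_nsmul {α : Type*} [AddCommMonoid α] [LinearOrder α]
    [IsOrderedCancelAddMonoid α] {s : Finset α} (hs : s.Nonempty) (n : ℕ) :
    n * (#s - 1) + 1 ≤ #(n • s) := by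
  induction n with
  | zero => simp
  | succ n ih =>
    have hcd := cauchy_davenport_add_of_linearOrder_isCancelAdd (hs.nsmul (n := n)) hs
    rw [succ_nsmul]
    have := hs.card_pos
    rw [add_one_mul]
    omega

section genSumset

variable {r n : ℕ} {A : Finset ℤ}

theorem genSumset_mono {r' : ℕ} (hr : r ≤ r') : genSumset r n A ⊆ genSumset r' n A :=
  fun _ ⟨lam, hle, hsupp, hsum, hval⟩ => ⟨lam, fun a => (hle a).trans hr, hsupp, hsum, hval⟩

theorem nsmul_subset_genSumset : ((n • A : Finset ℤ) : Set ℤ) ⊆ genSumset n n A := by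
  classical
  induction n with
  | zero =>
    intro x hx
    simp only [zero_nsmul, coe_zero, Set.mem_zero] at hx
    exact ⟨0, by simp, by simp, by simp, by simp [hx]⟩
  | succ n ih =>
    intro x hx
    rw [succ_nsmul, coe_add] at hx
    obtain ⟨y, hy, a, ha, rfl⟩ := Set.mem_add.1 hx
    rw [mem_coe] at ha
    obtain ⟨lam, hle, hsupp, hsum, hval⟩ := ih hy
    refine ⟨lam + Pi.single a 1, fun b => ?_, fun b hb => ?_, ?_, ?_⟩
    · have := hle b
      rcases eq_or_ne b a with rfl | hba
      · simpa
      · rw [Pi.add_apply, Pi.single_eq_of_ne hba, add_zero]; omega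
    · simp [hsupp b hb, ne_of_mem_of_not_mem ha hb |>.symm]
    · simp [sum_add_distrib, hsum, Pi.single_apply, ha]
    · simp [sum_add_distrib, add_mul, hval, Pi.single_apply, ha]

theorem sub_mem_genSumset_card_mul_sub {x : ℤ} (hx : x ∈ genSumset r n A) :
    r * ∑ a ∈ A, a - x ∈ genSumset r (#A * r - n) A := by
  classical
  obtain ⟨lam, hle, hsupp, rfl, rfl⟩ := hx
  refine ⟨fun a => if a ∈ A then r - lam a else 0, fun a => ?_, fun a ha => if_neg ha, ?_, ?_⟩
  · dsimp only; split_ifs <;> omega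
  · rw [sum_ite_mem, inter_self, sum_tsub_distrib _ fun a _ => hle a]
    simp [mul_comm]
  · rw [mul_sum, ← sum_sub_distrib]
    refine sum_congr rfl fun a ha => ?_
    dsimp only
    rw [if_pos ha, Nat.cast_sub (hle a)]
    ring

theorem nsmul_le_of_mem_genSumset {m x : ℤ} (hm : ∀ a ∈ A, m ≤ a) (hx : x ∈ genSumset r n A) :
    n • m ≤ x := by
  obtain ⟨lam, -, -, rfl, rfl⟩ := hx
  rw [sum_smul]
  exact sum_le_sum fun a ha => by
    rw [nsmul_eq_mul]; exact mul_le_mul_of_nonneg_left (hm a ha) (by positivity)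

end genSumset

theorem genSumset_subset_HSumset {r n : ℕ} {H : Finset ℕ} {A : Finset ℤ} (hn : n ∈ H) :
    genSumset r n A ⊆ HSumset r H A :=
  Set.subset_biUnion_of_mem (u := fun n => genSumset r n A) hn

theorem HSumset_subset_Icc {r : ℕ} {H : Finset ℕ} {A : Finset ℤ} (hA : ∀ a ∈ A, 0 ≤ a) :
    HSumset r H A ⊆ Set.Icc 0 (r * ∑ a ∈ A, a) := by
  intro x hx
  simp only [HSumset, Set.mem_iUnion] at hx
  obtain ⟨n, -, lam, hle, -, -, rfl⟩ := hx
  refine ⟨sum_nonneg fun a ha => mul_nonneg (by positivity) (hA a ha), ?_⟩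
  rw [mul_sum]
  exact sum_le_sum fun a ha => mul_le_mul_of_nonneg_right (by exact_mod_cast hle a) (hA a ha)

theorem sub_nsmul_mem_genSumset {r n : ℕ} {A : Finset ℤ} {y : ℤ} (hn : n ≤ #A * r)
    (hr : #A * r - n ≤ r) (hy : y ∈ (#A * r - n) • A) : r * ∑ a ∈ A, a - y ∈ genSumset r n A := by
  have := sub_mem_genSumset_card_mul_sub (genSumset_mono hr (nsmul_subset_genSumset hy))
  rwa [Nat.sub_sub_self hn] at this

theorem le_ncard_HSumset {r h₀ : ℕ} {A : Finset ℤ} {H : Finset ℕ} (hA : ∀ a ∈ A, 0 < a)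
    (hAne : A.Nonempty) (h₀H : h₀ ∈ H) (hH : ∀ x ∈ H, h₀ ≤ x ∧ x ≤ #A * r)
    (hd : #A * r - h₀ ≤ r) :
    (#A - 1) * (#A * r - h₀) + #H ≤ (HSumset r H A).ncard := by
  classical
  set T := r * ∑ a ∈ A, a
  set a₀ := A.min' hAne
  set f : ℕ → ℤ := fun x => T - (#A * r - x) • a₀
  have hf : StrictMonoOn f H := fun x hx y hy hxy =>
    sub_lt_sub_left (nsmul_lt_nsmul_left (hA a₀ (min'_mem A hAne)) (by have := (hH y hy).2; omega)) T
  set S₁ := (#A * r - h₀) • A |>.image (T - ·)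
  set S₂ := (H.erase h₀).image f
  have hS₁ : ∀ y ∈ S₁, y ∈ genSumset r h₀ A ∧ y ≤ f h₀ := by
    simp only [S₁, mem_image]
    rintro _ ⟨z, hz, rfl⟩
    exact ⟨sub_nsmul_mem_genSumset (hH h₀ h₀H).2 hd hz,
      sub_le_sub_left (nsmul_le_of_mem_genSumset (fun a ha => min'_le A a ha)
        (nsmul_subset_genSumset hz)) T⟩
  have hS₂ : ∀ x ∈ H, f x ∈ genSumset r x A := fun x hx =>
    sub_nsmul_mem_genSumset (hH x hx).2 (by have := (hH x hx).1; omega) (nsmul_mem_nsmul (min'_mem A hAne))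
  have hdisj : Disjoint S₁ S₂ := by
    refine disjoint_left.2 fun y hy hy₂ => ?_
    obtain ⟨x, hx, rfl⟩ := mem_image.1 hy₂
    obtain ⟨hxh₀, hxH⟩ := mem_erase.1 hx
    exact (hS₁ _ hy).2.not_gt (hf h₀H hxH (lt_of_le_of_ne (hH x hxH).1 hxh₀.symm))
  have hsub : ((S₁ ∪ S₂ : Finset ℤ) : Set ℤ) ⊆ HSumset r H A := by
    simp only [coe_union, Set.union_subset_iff, S₂, coe_image, Set.image_subset_iff]
    exact ⟨fun y hy => genSumset_subset_HSumset h₀H (hS₁ y hy).1,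
      fun x hx => genSumset_subset_HSumset (mem_of_mem_erase hx) (hS₂ x (mem_of_mem_erase hx))⟩
  have hcard₁ : (#A - 1) * (#A * r - h₀) + 1 ≤ #S₁ := by
    rw [card_image_of_injective _ sub_right_injective, mul_comm]
    exact mul_card_sub_one_add_one_le_card_nsmul hAne _
  have hcard₂ : #S₂ = #H - 1 := by
    rw [card_image_of_injOn (hf.injOn.mono (erase_subset _ _)), card_erase_of_mem h₀H]
  have hH₀ := card_pos.2 ⟨h₀, h₀H⟩
  calc (#A - 1) * (#A * r - h₀) + #H ≤ #(S₁ ∪ S₂) := by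
        rw [card_union_of_disjoint hdisj]; omega
    _ = ((S₁ ∪ S₂ : Finset ℤ) : Set ℤ).ncard := (Set.ncard_coe_finset _).symm
    _ ≤ (HSumset r H A).ncard := Set.ncard_le_ncard hsub
        ((Set.finite_Icc _ _).subset (HSumset_subset_Icc fun a ha => (hA a ha).le))

theorem bound_eq_sub_one_mul_sub {k r h : ℕ} (hlow : (k - 1) * r ≤ h) (hup : h ≤ k * r) :
    ((h / r : ℕ) : ℤ) * r * ((k : ℤ) - ((h / r : ℕ) : ℤ))
      + ((h : ℤ) - ((h / r : ℕ) : ℤ) * r) * ((k : ℤ) - 2 * ((h / r : ℕ) : ℤ) - 1)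
      = ((k : ℤ) - 1) * ((k : ℤ) * r - h) := by
  rcases Nat.eq_zero_or_pos r with rfl | hr
  · simp_all
  rcases hup.eq_or_lt with rfl | hlt
  · rw [Nat.mul_div_cancel _ hr]; push_cast; ring
  · have hk : 1 ≤ k := Nat.pos_of_ne_zero (by rintro rfl; simp at hlt)
    rw [Nat.div_eq_of_lt_le hlow (by rwa [Nat.sub_add_cancel hk]), Nat.cast_sub hk]
    ring

theorem stmt_2_general (k t r : ℕ) (A : Finset ℤ) (H : Finset ℕ) (h : ℕ → ℕ)
    (hk : 3 ≤ k) (hAcard : A.card = k) (hApos : ∀ a ∈ A, 0 < a)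
    (ht : 1 ≤ t) (hHcard : H.card = t)
    (hmono : StrictMonoOn h (Set.Icc 1 t))
    (hHim : H = (Finset.Icc 1 t).image h)
    (hlow : (k - 1) * r ≤ h 1) (hmax : h t ≤ k * r) :
    ((h 1 / r : ℕ) : ℤ) * r * ((k : ℤ) - ((h 1 / r : ℕ) : ℤ))
      + ((h 1 : ℤ) - ((h 1 / r : ℕ) : ℤ) * r) * ((k : ℤ) - 2 * ((h 1 / r : ℕ) : ℤ) - 1)
      + t ≤ ((HSumset r H A).ncard : ℤ) := by
  have hmem : ∀ j ∈ Icc 1 t, h 1 ≤ h j ∧ h j ≤ k * r := fun j hj =>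
    have hj := mem_Icc.1 hj
    ⟨hmono.monotoneOn ⟨le_rfl, ht⟩ hj hj.1,
      (hmono.monotoneOn hj ⟨ht, le_rfl⟩ hj.2).trans hmax⟩
  have hup : h 1 ≤ k * r := (hmem 1 (mem_Icc.2 ⟨le_rfl, ht⟩)).2
  have hH : ∀ x ∈ H, h 1 ≤ x ∧ x ≤ #A * r := by
    rw [hHim, hAcard, forall_mem_image]; exact hmem
  have h1H : h 1 ∈ H := hHim ▸ mem_image_of_mem h (mem_Icc.2 ⟨le_rfl, ht⟩)
  have hAne : A.Nonempty := card_pos.1 (by omega)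
  have hdef : #A * r - h 1 ≤ r := by
    rw [hAcard]
    rw [Nat.sub_one_mul] at hlow
    omega
  have hcount := le_ncard_HSumset hApos hAne h1H hH hdef
  rw [bound_eq_sub_one_mul_sub hlow hup]
  subst hAcard hHcard
  zify [show 1 ≤ #A by omega, hup] at hcount
  linarith

theorem stmt_2 (k t r : ℕ) (A : Finset ℤ) (H : Finset ℕ) (h : ℕ → ℕ)
    (hk : 3 ≤ k) (hAcard : A.card = k) (hApos : ∀ a ∈ A, 0 < a)
    (hr1 : 1 ≤ r) (ht : 1 ≤ t) (hHcard : H.card = t) (hHpos : ∀ x ∈ H, 0 < x)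
    (hmono : StrictMonoOn h (Set.Icc 1 t))
    (hHim : H = (Finset.Icc 1 t).image h)
    (hlow : (k - 1) * r ≤ h 1) (hmax : h t ≤ k * r) :
    ((h 1 / r : ℕ) : ℤ) * r * ((k : ℤ) - ((h 1 / r : ℕ) : ℤ))
      + ((h 1 : ℤ) - ((h 1 / r : ℕ) : ℤ) * r) * ((k : ℤ) - 2 * ((h 1 / r : ℕ) : ℤ) - 1)
      + t ≤ ((HSumset r H A).ncard : ℤ) :=
  stmt_2_general k t r A H h hk hAcard hApos ht hHcard hmono hHim hlow hmax
end

section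
/- Let r ≥ 2 be an integer, let A be a set of k ≥ 7 nonnegative integers with 0 ∈ A, and let H be a set of t ≥ 2 positive integers with (k−2)r − 1 < min(H) < max(H) < (k−1)r. Let m_1 = ⌊min(H)/r⌋. If |H^{(r)}A| = m_1·r·(k − m_1) + (min(H) − m_1·r)·(k − 2m_1 − 1) + t, then H is an arithmetic progression with some common difference d with 1 ≤ d ≤ r − 1, and A is an arithmetic progression with common difference d·min(A∖{0}). -/
/-- `S` is an arithmetic progression of natural numbers with common difference `d`. -/
def IsAPNat (S : Finset ℕ) (d : ℕ) : Prop :=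
  ∃ s : ℕ, S = (Finset.range S.card).image (fun i => s + i * d)

/-- `S` is an arithmetic progression of integers with common difference `d`. -/
def IsAPInt (S : Finset ℤ) (d : ℤ) : Prop :=
  ∃ s : ℤ, S = (Finset.range S.card).image (fun i : ℕ => s + (i : ℤ) * d)

set_option maxHeartbeats 1000000
open Finset


def Ca (r J0 : ℕ) (a : ℕ → ℤ) : Finset ℤ :=
  (Finset.Icc J0 r).image (fun j : ℕ => (j:ℤ) * a 1)
def Cb (k r : ℕ) (a : ℕ → ℤ) : Finset ℤ :=
  ((Finset.Icc 1 (k-2)) ×ˢ (Finset.Icc 1 r)).image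
  (fun pi : ℕ × ℕ => ((r:ℤ) - pi.2) * a pi.1 + (pi.2:ℤ) * a (pi.1+1))
def Cc (k r E : ℕ) (a : ℕ → ℤ) : Finset ℤ :=
  ((Finset.Icc 1 E) ×ˢ (Finset.Icc 1 (k-2))).image
  (fun dq : ℕ × ℕ => (r:ℤ) * a (k-1) + ((dq.1:ℤ) - 1) * a (k-2) + a dq.2)

section rig
variable {k r J0 E : ℕ} {a : ℕ → ℤ}
variable (hk : 7 ≤ k) (hr : 2 ≤ r)
  (amono : ∀ m n : ℕ, m < n → n < k → a m < a n) (ha0 : a 0 = 0)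

include hk hr amono ha0 in
lemma rig1 (i : ℕ) (hi2 : 2 ≤ i) (hik : i ≤ k-2)
    (hx : a (i-1) + ((r:ℤ)-2) * a i + a (i+1) ∈ Ca r J0 a ∪ Cb k r a ∪ Cc k r E a) :
    a i - a (i-1) = a (i+1) - a i := by
  have a1pos : 0 < a 1 := by rw [← ha0]; exact amono 0 1 one_pos (by omega)
  have hm1 : a 1 ≤ a (i-1) := by
    rcases eq_or_lt_of_le (show 1 ≤ i - 1 by omega) with h | h
    · exact le_of_eq (congrArg a h)
    · exact le_of_lt (amono 1 (i-1) h (by omega))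
  have hm2 : a (i-1) < a i := by
    have : i - 1 + 1 = i := by omega
    rw [← this]; exact amono (i-1) (i-1+1) (by omega) (by omega)
  have hm3 : a i < a (i+1) := amono i (i+1) (by omega) (by omega)
  have h1i : a 1 < a i := lt_of_le_of_lt hm1 hm2
  rcases Finset.mem_union.1 hx with hx | hx
  · rcases Finset.mem_union.1 hx with hx | hx
    · -- Ca: impossible
      exfalso
      obtain ⟨j, hj, hje⟩ := Finset.mem_image.1 hx
      rw [Finset.mem_Icc] at hj
      have hjr : (j:ℤ) ≤ r := by exact_mod_cast hj.2
      have e1 : ((r:ℤ)-2) * (a i - a 1) ≥ 0 := mul_nonneg (by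
        have : (2:ℤ) ≤ r := by exact_mod_cast hr
        linarith) (by linarith)
      have e2 : (j:ℤ) * a 1 ≤ (r:ℤ) * a 1 := by
        apply mul_le_mul_of_nonneg_right hjr (le_of_lt a1pos)
      nlinarith [hje]
    · -- Cb
      obtain ⟨⟨p, ii⟩, hpi, hje⟩ := Finset.mem_image.1 hx
      rw [Finset.mem_product, Finset.mem_Icc, Finset.mem_Icc] at hpi
      obtain ⟨⟨hp1, hp2⟩, hii1, hii2⟩ := hpi
      simp only at hje
      have hiiz1 : (1:ℤ) ≤ ii := by exact_mod_cast hii1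
      have hiiz2 : (ii:ℤ) ≤ r := by exact_mod_cast hii2
      have hrz : (2:ℤ) ≤ r := by exact_mod_cast hr
      -- x strictly between L and R
      have hL : a (i-1) + ((r:ℤ)-1) * a i < a (i-1) + ((r:ℤ)-2) * a i + a (i+1) := by nlinarith
      have hR : a (i-1) + ((r:ℤ)-2) * a i + a (i+1) < ((r:ℤ)-1) * a i + a (i+1) := by nlinarith
      rcases lt_trichotomy p (i-1) with hp | hp | hp
      · exfalso
        have hb1 : a (p+1) ≤ a (i-1) := by
          rcases eq_or_lt_of_le (show p+1 ≤ i-1 by omega) with h | h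
          · exact le_of_eq (congrArg a h)
          · exact le_of_lt (amono (p+1) (i-1) h (by omega))
        have hb2 : a p < a (p+1) := amono p (p+1) (by omega) (by omega)
        have e1 : ((r:ℤ)-ii) * (a (p+1) - a p) ≥ 0 := mul_nonneg (by linarith) (by linarith)
        have e2 : (r:ℤ) * (a (i-1) - a (p+1)) ≥ 0 := mul_nonneg (by linarith) (by linarith)
        nlinarith [hje]
      · -- p = i-1 : forces ii = r and conclusion
        have hpe : p = i - 1 := hp
        rw [hpe, show i - 1 + 1 = i by omega] at hje
        have hiir : ii = r := by
          by_contra hne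
          have hiilt : (ii:ℤ) ≤ (r:ℤ) - 1 := by
            have : ii < r := lt_of_le_of_ne hii2 hne
            have : (ii:ℤ) < r := by exact_mod_cast this
            linarith
          have e1 : ((r:ℤ) - 1 - ii) * (a i - a (i-1)) ≥ 0 :=
            mul_nonneg (by linarith) (by linarith)
          nlinarith [hje]
        rw [hiir] at hje
        simp at hje
        linarith [hje]
      · exfalso
        rcases eq_or_lt_of_le (show i ≤ p by omega) with hpi | hpi
        · -- p = i
          have e1 : ((ii:ℤ) - 1) * (a (p+1) - a p) ≥ 0 := by
            apply mul_nonneg (by linarith)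
            have : a p < a (p+1) := amono p (p+1) (by omega) (by omega)
            linarith
          rw [hpi] at hje hR
          nlinarith [hje, hR, e1]
        · have hb1 : a (i+1) ≤ a p := by
            rcases eq_or_lt_of_le (show i+1 ≤ p by omega) with h | h
            · exact le_of_eq (congrArg a h)
            · exact le_of_lt (amono (i+1) p h (by omega))
          have hb2 : a p < a (p+1) := amono p (p+1) (by omega) (by omega)
          have e1 : (ii:ℤ) * (a (p+1) - a p) ≥ 0 := mul_nonneg (by linarith) (by linarith)
          have e2 : (r:ℤ) * (a p - a (i+1)) ≥ 0 := mul_nonneg (by linarith) (by linarith)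
          nlinarith [hje]
  · -- Cc: impossible
    exfalso
    obtain ⟨⟨d, q⟩, hdq, hje⟩ := Finset.mem_image.1 hx
    rw [Finset.mem_product, Finset.mem_Icc, Finset.mem_Icc] at hdq
    obtain ⟨⟨hd1, hd2⟩, hq1, hq2⟩ := hdq
    simp only at hje
    have hdz : (1:ℤ) ≤ d := by exact_mod_cast hd1
    have hrz : (2:ℤ) ≤ r := by exact_mod_cast hr
    have hb1 : a (i-1) ≤ a (k-3) := by
      rcases eq_or_lt_of_le (show i-1 ≤ k-3 by omega) with h | h
      · exact le_of_eq (congrArg a h)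
      · exact le_of_lt (amono (i-1) (k-3) h (by omega))
    have hb2 : a i ≤ a (k-2) := by
      rcases eq_or_lt_of_le (show i ≤ k-2 by omega) with h | h
      · exact le_of_eq (congrArg a h)
      · exact le_of_lt (amono i (k-2) h (by omega))
    have hb3 : a (i+1) ≤ a (k-1) := by
      rcases eq_or_lt_of_le (show i+1 ≤ k-1 by omega) with h | h
      · exact le_of_eq (congrArg a h)
      · exact le_of_lt (amono (i+1) (k-1) h (by omega))
    have hb4 : a (k-3) < a (k-2) := amono (k-3) (k-2) (by omega) (by omega)
    have hb5 : a (k-2) < a (k-1) := amono (k-2) (k-1) (by omega) (by omega)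
    have hq : a 1 ≤ a q := by
      rcases eq_or_lt_of_le (show 1 ≤ q by omega) with h | h
      · exact le_of_eq (congrArg a h)
      · exact le_of_lt (amono 1 q h (by omega))
    have a1pos' : 0 < a q := lt_of_lt_of_le a1pos hq
    have e1 : ((d:ℤ) - 1) * a (k-2) ≥ 0 := mul_nonneg (by linarith) (by linarith)
    have e2 : ((r:ℤ) - 2) * (a (k-1) - a (k-2)) ≥ 0 := mul_nonneg (by linarith) (by linarith)
    nlinarith [hje]
end rig

section rig23
variable {k r J0 E : ℕ} {a : ℕ → ℤ} {Dv : ℤ}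
variable (hk : 7 ≤ k) (hr : 2 ≤ r)
  (amono : ∀ m n : ℕ, m < n → n < k → a m < a n) (ha0 : a 0 = 0)
  (hap : ∀ p : ℕ, 1 ≤ p → p ≤ k-1 → a p = a 1 + ((p:ℤ)-1) * Dv)

include hk hr amono ha0 hap in
lemma rig2 (hJ0 : 1 ≤ J0) (hJ0r : J0 + 1 ≤ r)
    (hw : ((J0:ℤ)-1) * a 1 + a 2 ∈ Ca r J0 a ∪ Cb k r a ∪ Cc k r E a) :
    a 1 ≤ Dv := by
  have a1pos : 0 < a 1 := by rw [← ha0]; exact amono 0 1 one_pos (by omega)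
  have hDpos : 0 < Dv := by
    have h12 : a 1 < a 2 := amono 1 2 one_lt_two (by omega)
    have := hap 2 (by omega) (by omega)
    simp at this
    linarith
  have ha2 : a 2 = a 1 + Dv := by
    have := hap 2 (by omega) (by omega); simpa using this
  have hJz : (1:ℤ) ≤ J0 := by exact_mod_cast hJ0
  have hJrz : (J0:ℤ) + 1 ≤ r := by exact_mod_cast hJ0r
  rcases Finset.mem_union.1 hw with hw | hw
  · rcases Finset.mem_union.1 hw with hw | hw
    · obtain ⟨j, hj, hje⟩ := Finset.mem_image.1 hw
      rw [Finset.mem_Icc] at hj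
      have hjz : (J0:ℤ) ≤ j := by exact_mod_cast hj.1
      -- J0 * a1 + Dv = j * a1 so Dv = (j - J0) * a1 and j > J0
      have key : Dv = ((j:ℤ) - J0) * a 1 := by linarith [hje, ha2]; 
      have : (J0:ℤ) < j := by
        by_contra hcon
        push_neg at hcon
        have : ((j:ℤ) - J0) * a 1 ≤ 0 := mul_nonpos_of_nonpos_of_nonneg (by linarith) (le_of_lt a1pos)
        linarith
      have : (1:ℤ) ≤ (j:ℤ) - J0 := by linarith
      nlinarith
    · exfalso
      obtain ⟨⟨p, ii⟩, hpi, hje⟩ := Finset.mem_image.1 hw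
      rw [Finset.mem_product, Finset.mem_Icc, Finset.mem_Icc] at hpi
      obtain ⟨⟨hp1, hp2⟩, hii1, hii2⟩ := hpi
      simp only at hje
      have hiiz1 : (1:ℤ) ≤ ii := by exact_mod_cast hii1
      have hpz : (1:ℤ) ≤ p := by exact_mod_cast hp1
      have hrz : (2:ℤ) ≤ r := by exact_mod_cast hr
      have hvp : a p = a 1 + ((p:ℤ)-1) * Dv := hap p hp1 (by omega)
      have hvp1 : a (p+1) = a 1 + (p:ℤ) * Dv := by
        have := hap (p+1) (by omega) (by omega)
        push_cast at this
        simpa using this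
      -- value = r * a1 + ((p-1)*r + ii) * Dv
      have hval : ((r:ℤ) - ii) * a p + (ii:ℤ) * a (p+1)
          = (r:ℤ) * a 1 + (((p:ℤ)-1) * r + ii) * Dv := by
        rw [hvp, hvp1]; ring
      have hm : (1:ℤ) ≤ ((p:ℤ)-1) * r + ii := by nlinarith
      -- equation: J0*a1 + Dv = r*a1 + m*Dv
      have heq2 : ((J0:ℤ) - r) * a 1 = (((p:ℤ)-1) * r + ii - 1) * Dv := by
        rw [hval] at hje
        linarith [hje, ha2]
      have hlhs : ((J0:ℤ) - r) * a 1 ≤ -a 1 := by nlinarith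
      have hrhs : 0 ≤ (((p:ℤ)-1) * r + ii - 1) * Dv := mul_nonneg (by linarith) (le_of_lt hDpos)
      linarith
  · exfalso
    obtain ⟨⟨d, q⟩, hdq, hje⟩ := Finset.mem_image.1 hw
    rw [Finset.mem_product, Finset.mem_Icc, Finset.mem_Icc] at hdq
    obtain ⟨⟨hd1, hd2⟩, hq1, hq2⟩ := hdq
    simp only at hje
    have hdz : (1:ℤ) ≤ d := by exact_mod_cast hd1
    have hrz : (2:ℤ) ≤ r := by exact_mod_cast hr
    have hqk : a q ≥ a 1 := by
      rcases eq_or_lt_of_le (show 1 ≤ q by omega) with h | h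
      · exact ge_of_eq (congrArg a h).symm
      · exact le_of_lt (amono 1 q h (by omega))
    have hk2 : 0 < a (k-2) := by rw [← ha0]; exact amono 0 (k-2) (by omega) (by omega)
    have hk1 : a 2 ≤ a (k-1) := by
      rcases eq_or_lt_of_le (show 2 ≤ k-1 by omega) with h | h
      · exact le_of_eq (congrArg a h)
      · exact le_of_lt (amono 2 (k-1) h (by omega))
    have hk1' : a 1 < a (k-1) := amono 1 (k-1) (by omega) (by omega)
    have e1 : ((d:ℤ) - 1) * a (k-2) ≥ 0 := mul_nonneg (by linarith) (le_of_lt hk2)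
    have e2 : ((r:ℤ) - 1) * (a (k-1) - a 1) > 0 := mul_pos (by linarith) (by linarith)
    -- w = (J0-1)*a1 + a2 ≤ (r-2)*a1 + a(k-1) < r*a(k-1) + a q ≤ RHS
    have e3 : ((J0:ℤ) - 1) * a 1 ≤ ((r:ℤ) - 2) * a 1 := by nlinarith
    nlinarith [hje]

include hk hr amono ha0 hap in
lemma rig3 (hDa : a 1 ≤ Dv)
    (hy : (r:ℤ) * a 1 + a 2 ∈ Ca r J0 a ∪ Cb k r a ∪ Cc k r E a) :
    Dv = a 1 := by
  have a1pos : 0 < a 1 := by rw [← ha0]; exact amono 0 1 one_pos (by omega)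
  have hDpos : 0 < Dv := lt_of_lt_of_le a1pos hDa
  have ha2 : a 2 = a 1 + Dv := by
    have := hap 2 (by omega) (by omega); simpa using this
  have hrz : (2:ℤ) ≤ r := by exact_mod_cast hr
  rcases Finset.mem_union.1 hy with hy | hy
  · rcases Finset.mem_union.1 hy with hy | hy
    · exfalso
      obtain ⟨j, hj, hje⟩ := Finset.mem_image.1 hy
      rw [Finset.mem_Icc] at hj
      have hjz : (j:ℤ) ≤ r := by exact_mod_cast hj.2
      have : (j:ℤ) * a 1 ≤ (r:ℤ) * a 1 := mul_le_mul_of_nonneg_right hjz (le_of_lt a1pos)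
      have h2pos : 0 < a 2 := by rw [← ha0]; exact amono 0 2 (by omega) (by omega)
      linarith [hje]
    · obtain ⟨⟨p, ii⟩, hpi, hje⟩ := Finset.mem_image.1 hy
      rw [Finset.mem_product, Finset.mem_Icc, Finset.mem_Icc] at hpi
      obtain ⟨⟨hp1, hp2⟩, hii1, hii2⟩ := hpi
      simp only at hje
      have hiiz1 : (1:ℤ) ≤ ii := by exact_mod_cast hii1
      have hpz : (1:ℤ) ≤ p := by exact_mod_cast hp1
      have hvp : a p = a 1 + ((p:ℤ)-1) * Dv := hap p hp1 (by omega)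
      have hvp1 : a (p+1) = a 1 + (p:ℤ) * Dv := by
        have := hap (p+1) (by omega) (by omega)
        push_cast at this
        simpa using this
      have hval : ((r:ℤ) - ii) * a p + (ii:ℤ) * a (p+1)
          = (r:ℤ) * a 1 + (((p:ℤ)-1) * r + ii) * Dv := by
        rw [hvp, hvp1]; ring
      -- r*a1 + a1 + Dv = r*a1 + m*Dv => a1 = (m-1)*Dv
      have heq2 : a 1 = (((p:ℤ)-1) * r + ii - 1) * Dv := by
        rw [hval] at hje
        linarith [hje, ha2]
      have hm : (1:ℤ) ≤ ((p:ℤ)-1) * r + ii := by nlinarith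
      -- m = 1 impossible since a1 > 0; m ≥ 2 gives a1 ≥ Dv
      rcases eq_or_lt_of_le hm with h | h
      · exfalso
        rw [← h] at heq2
        simp at heq2
        linarith
      · have : (1:ℤ) ≤ ((p:ℤ)-1) * r + ii - 1 := by linarith
        nlinarith [heq2]
  · exfalso
    obtain ⟨⟨d, q⟩, hdq, hje⟩ := Finset.mem_image.1 hy
    rw [Finset.mem_product, Finset.mem_Icc, Finset.mem_Icc] at hdq
    obtain ⟨⟨hd1, hd2⟩, hq1, hq2⟩ := hdq
    simp only at hje
    have hdz : (1:ℤ) ≤ d := by exact_mod_cast hd1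
    have hqk : a q ≥ a 1 := by
      rcases eq_or_lt_of_le (show 1 ≤ q by omega) with h | h
      · exact ge_of_eq (congrArg a h).symm
      · exact le_of_lt (amono 1 q h (by omega))
    have hk2 : 0 < a (k-2) := by rw [← ha0]; exact amono 0 (k-2) (by omega) (by omega)
    have hk1 : a 2 ≤ a (k-1) := by
      rcases eq_or_lt_of_le (show 2 ≤ k-1 by omega) with h | h
      · exact le_of_eq (congrArg a h)
      · exact le_of_lt (amono 2 (k-1) h (by omega))
    have hk1' : a 1 < a (k-1) := amono 1 (k-1) (by omega) (by omega)
    have e1 : ((d:ℤ) - 1) * a (k-2) ≥ 0 := mul_nonneg (by linarith) (le_of_lt hk2)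
    have e2 : ((r:ℤ) - 1) * (a (k-1) - a 1) > 0 := mul_pos (by linarith) (by linarith)
    nlinarith [hje]
end rig23


section chain
variable {k r J0 E : ℕ} {a : ℕ → ℤ}
variable (hk : 7 ≤ k) (hr : 2 ≤ r)
  (amono : ∀ m n : ℕ, m < n → n < k → a m < a n) (ha0 : a 0 = 0)

include amono in
lemma amono_le : ∀ m n : ℕ, m ≤ n → n < k → a m ≤ a n := by
  intro m n hmn hn
  rcases eq_or_lt_of_le hmn with h | h
  · exact le_of_eq (congrArg a h)
  · exact le_of_lt (amono m n h hn)

include amono ha0 in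
lemma apos : ∀ n : ℕ, 1 ≤ n → n < k → 0 < a n := by
  intro n h1 hn; rw [← ha0]; exact amono 0 n h1 hn

include hk amono ha0 in
lemma Ca_le : ∀ x ∈ Ca r J0 a, x ≤ (r:ℤ) * a 1 := by
  intro x hx
  obtain ⟨j, hj, rfl⟩ := Finset.mem_image.1 hx
  rw [Finset.mem_Icc] at hj
  have h1 : 0 < a 1 := apos amono ha0 1 le_rfl (by omega)
  have : (j:ℤ) ≤ r := by exact_mod_cast hj.2
  nlinarith

include hk amono ha0 in
lemma Cb_gt : ∀ x ∈ Cb k r a, (r:ℤ) * a 1 < x := by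
  intro x hx
  obtain ⟨⟨p, i⟩, hpi, rfl⟩ := Finset.mem_image.1 hx
  rw [Finset.mem_product, Finset.mem_Icc, Finset.mem_Icc] at hpi
  obtain ⟨⟨hp1, hp2⟩, hi1, hi2⟩ := hpi
  have h1 : a 1 ≤ a p := amono_le amono 1 p hp1 (by omega)
  have h2 : a p < a (p+1) := amono p (p+1) (by omega) (by omega)
  have hir : (i:ℤ) ≤ r := by exact_mod_cast hi2
  have hi1' : (1:ℤ) ≤ i := by exact_mod_cast hi1
  nlinarith

include hk amono in
lemma Cb_le : ∀ x ∈ Cb k r a, x ≤ (r:ℤ) * a (k-1) := by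
  intro x hx
  obtain ⟨⟨p, i⟩, hpi, rfl⟩ := Finset.mem_image.1 hx
  rw [Finset.mem_product, Finset.mem_Icc, Finset.mem_Icc] at hpi
  obtain ⟨⟨hp1, hp2⟩, hi1, hi2⟩ := hpi
  have h1 : a p ≤ a (k-1) := amono_le amono p (k-1) (by omega) (by omega)
  have h2 : a (p+1) ≤ a (k-1) := amono_le amono (p+1) (k-1) (by omega) (by omega)
  have hir : (i:ℤ) ≤ r := by exact_mod_cast hi2
  have hi1' : (1:ℤ) ≤ i := by exact_mod_cast hi1
  nlinarith

include hk amono ha0 in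
lemma Cc_gt : ∀ x ∈ Cc k r E a, (r:ℤ) * a (k-1) < x := by
  intro x hx
  obtain ⟨⟨d, q⟩, hdq, rfl⟩ := Finset.mem_image.1 hx
  rw [Finset.mem_product, Finset.mem_Icc, Finset.mem_Icc] at hdq
  obtain ⟨⟨hd1, hd2⟩, hq1, hq2⟩ := hdq
  have h1 : 0 < a q := apos amono ha0 q hq1 (by omega)
  have h2 : 0 < a (k-2) := apos amono ha0 (k-2) (by omega) (by omega)
  have hd1' : (1:ℤ) ≤ d := by exact_mod_cast hd1
  nlinarith

include hk hr amono ha0 in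
lemma card_C (hJ0 : 1 ≤ J0) (hJ0r : J0 ≤ r) (hE : 1 ≤ E) (hEr : E ≤ r) :
    (Ca r J0 a ∪ Cb k r a ∪ Cc k r E a).card
    = (r + 1 - J0) + (k-2)*r + E*(k-2) := by
  have h1 : 0 < a 1 := apos amono ha0 1 le_rfl (by omega)
  have cCa : (Ca r J0 a).card = r + 1 - J0 := by
    rw [Ca, Finset.card_image_of_injOn, Nat.card_Icc]
    intro x hx y hy hxy
    have : (x:ℤ) = (y:ℤ) := by
      simp only at hxy
      exact mul_right_cancel₀ (ne_of_gt h1) hxy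
    exact_mod_cast this
  have cCb : (Cb k r a).card = (k-2)*r := by
    rw [Cb, Finset.card_image_of_injOn]
    · rw [Finset.card_product, Nat.card_Icc, Nat.card_Icc]
      congr 1 <;> omega
    · rintro ⟨p, i⟩ hpi ⟨p', i'⟩ hpi' heq
      rw [Finset.mem_coe, Finset.mem_product, Finset.mem_Icc, Finset.mem_Icc] at hpi hpi'
      obtain ⟨⟨hp1, hp2⟩, hi1, hi2⟩ := hpi
      obtain ⟨⟨hp1', hp2'⟩, hi1', hi2'⟩ := hpi'
      simp only at heq
      -- wlog p ≤ p'
      have key : ∀ p i p' i' : ℕ, 1 ≤ p → p ≤ k-2 → 1 ≤ i → i ≤ r →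
          1 ≤ p' → p' ≤ k-2 → 1 ≤ i' → i' ≤ r → p < p' →
          ((r:ℤ) - i) * a p + (i:ℤ) * a (p+1) ≠ ((r:ℤ) - i') * a p' + (i':ℤ) * a (p'+1) := by
        intro p i p' i' hp1 hp2 hi1 hi2 hp1' hp2' hi1' hi2' hpp
        have h2 : a (p+1) ≤ a p' := amono_le amono (p+1) p' (by omega) (by omega)
        have h3 : a p < a (p+1) := amono p (p+1) (by omega) (by omega)
        have h4 : a p' < a (p'+1) := amono p' (p'+1) (by omega) (by omega)
        have hir : (i:ℤ) ≤ r := by exact_mod_cast hi2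
        have hi1z : (1:ℤ) ≤ i := by exact_mod_cast hi1
        have hi1z' : (1:ℤ) ≤ i' := by exact_mod_cast hi1'
        have hirz' : (i':ℤ) ≤ r := by exact_mod_cast hi2'
        intro hcon
        have e1 : ((r:ℤ)-i)*(a (p+1) - a p) ≥ 0 := mul_nonneg (by linarith) (by linarith)
        have e2 : ((i':ℤ))*(a (p'+1) - a p') > 0 := mul_pos (by linarith) (by linarith)
        have e3 : (r:ℤ)*(a p' - a (p+1)) ≥ 0 :=
          mul_nonneg (by positivity) (by linarith)
        linarith
      rcases lt_trichotomy p p' with h | h | h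
      · exact absurd heq (key p i p' i' hp1 hp2 hi1 hi2 hp1' hp2' hi1' hi2' h)
      · subst h
        have h3 : a p < a (p+1) := amono p (p+1) (by omega) (by omega)
        have h5 : ((i:ℤ) - (i':ℤ)) * (a (p+1) - a p) = 0 := by linear_combination heq
        have h6 : a (p+1) - a p ≠ 0 := sub_ne_zero.2 (ne_of_gt h3)
        have h7 : (i:ℤ) - (i':ℤ) = 0 := by
          rcases mul_eq_zero.1 h5 with h | h
          · exact h
          · exact absurd h h6
        have : i = i' := by omega
        simp [this]
      · exact absurd heq.symm (key p' i' p i hp1' hp2' hi1' hi2' hp1 hp2 hi1 hi2 h)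
  have cCc : (Cc k r E a).card = E*(k-2) := by
    rw [Cc, Finset.card_image_of_injOn]
    · rw [Finset.card_product, Nat.card_Icc, Nat.card_Icc]
      congr 1 <;> omega
    · rintro ⟨d, q⟩ hdq ⟨d', q'⟩ hdq' heq
      rw [Finset.mem_coe, Finset.mem_product, Finset.mem_Icc, Finset.mem_Icc] at hdq hdq'
      obtain ⟨⟨hd1, hd2⟩, hq1, hq2⟩ := hdq
      obtain ⟨⟨hd1', hd2'⟩, hq1', hq2'⟩ := hdq'
      simp only at heq
      have key : ∀ d q d' q' : ℕ, 1 ≤ q → q ≤ k-2 → 1 ≤ q' → q' ≤ k-2 → d < d' →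
          (r:ℤ) * a (k-1) + ((d:ℤ) - 1) * a (k-2) + a q
            ≠ (r:ℤ) * a (k-1) + ((d':ℤ) - 1) * a (k-2) + a q' := by
        intro d q d' q' hq1 hq2 hq1' hq2' hdd hcon
        have h2 : a q ≤ a (k-2) := amono_le amono q (k-2) (by omega) (by omega)
        have h3 : 0 < a q' := apos amono ha0 q' hq1' (by omega)
        have hd : (d:ℤ) + 1 ≤ d' := by exact_mod_cast hdd
        have h4 : 0 < a (k-2) := apos amono ha0 (k-2) (by omega) (by omega)
        have e1 : ((d':ℤ) - d - 1) * a (k-2) ≥ 0 := mul_nonneg (by linarith) (le_of_lt h4)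
        linarith
      rcases lt_trichotomy d d' with h | h | h
      · exact absurd heq (key d q d' q' hq1 hq2 hq1' hq2' h)
      · subst h
        have : a q = a q' := by linarith [heq]
        have : q = q' := by
          by_contra hne
          rcases lt_or_gt_of_ne hne with hlt | hgt
          · exact absurd this (ne_of_lt (amono q q' hlt (by omega)))
          · exact absurd this.symm (ne_of_lt (amono q' q hgt (by omega)))
        simp [this]
      · exact absurd heq.symm (key d' q' d q hq1' hq2' hq1 hq2 h)
  have disj1 : Disjoint (Ca r J0 a) (Cb k r a) := by
    rw [Finset.disjoint_left]
    intro x hxa hxb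
    exact absurd (Ca_le hk amono ha0 x hxa) (not_le.2 (Cb_gt hk amono ha0 x hxb))
  have disj2 : Disjoint (Ca r J0 a ∪ Cb k r a) (Cc k r E a) := by
    rw [Finset.disjoint_left]
    intro x hx hxc
    have hgt := Cc_gt hk amono ha0 x hxc
    have hle1 : a 1 ≤ a (k-1) := amono_le amono 1 (k-1) (by omega) (by omega)
    rcases Finset.mem_union.1 hx with h | h
    · have hle := Ca_le hk amono ha0 x h
      have : (r:ℤ) * a 1 ≤ (r:ℤ) * a (k-1) :=
        mul_le_mul_of_nonneg_left hle1 (by positivity)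
      linarith
    · linarith [Cb_le hk amono x h]
  rw [Finset.card_union_of_disjoint disj2, Finset.card_union_of_disjoint disj1, cCa, cCb, cCc]
end chain



-- core membership lemma
lemma mem_core (k r h : ℕ) (A : Finset ℤ) (H : Finset ℕ) (a : ℕ → ℤ)
    (himg : (Finset.range k).image a = A)
    (hinj : ∀ m ∈ Finset.range k, ∀ n ∈ Finset.range k, a m = a n → m = n)
    (ha0 : a 0 = 0) (hk : 2 ≤ k)
    (hh : h ∈ H) (μ : ℕ → ℕ) (hμ0 : μ 0 = 0) (hle : ∀ n, μ n ≤ r)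
    (hjl : k*r ≤ h + r + ∑ n ∈ Finset.range k, μ n)
    (hjr : h + ∑ n ∈ Finset.range k, μ n ≤ k*r) :
    ((r:ℤ) * ∑ x ∈ A, x) - ∑ n ∈ Finset.range k, (μ n : ℤ) * a n ∈ HSumset r H A := by
  classical
  set j := ∑ n ∈ Finset.range k, μ n with hj
  set ν : ℕ → ℕ := fun n => if n = 0 then k*r - (h + j) else μ n with hν
  have h0A : (0:ℤ) ∈ A := by
    rw [← himg]; exact Finset.mem_image.2 ⟨0, Finset.mem_range.2 (by omega), ha0⟩
  set lam : ℤ → ℕ := fun x =>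
    if x = 0 then h + j + r - k*r
    else if x ∈ A then r - ∑ n ∈ Finset.range k, (if a n = x then μ n else 0)
    else 0 with hlam
  have hlam_an : ∀ n ∈ Finset.range k, lam (a n) + ν n = r := by
    intro n hn
    by_cases hn0 : n = 0
    · subst hn0; simp only [hlam, hν, ha0, if_pos rfl]; omega
    · have hne : a n ≠ 0 := by
        intro hcon
        exact hn0 (hinj n hn 0 (Finset.mem_range.2 (by omega)) (by rw [hcon, ha0]))
      have hmem : a n ∈ A := by
        rw [← himg]; exact Finset.mem_image_of_mem a hn
      have hcnt : ∑ m ∈ Finset.range k, (if a m = a n then μ m else 0) = μ n := by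
        rw [Finset.sum_eq_single n]
        · simp
        · intro m hm hmn
          have : a m ≠ a n := fun hc => hmn (hinj m hm n hn hc)
          simp [this]
        · intro hcon; exact absurd hn hcon
      have hμn : μ n ≤ r := hle n
      simp only [hlam, hν, if_neg hne, if_pos hmem, if_neg hn0]
      omega
  have hsumν : ∑ n ∈ Finset.range k, ν n = k*r - h := by
    have h0r : (0:ℕ) ∈ Finset.range k := Finset.mem_range.2 (by omega)
    rw [← Finset.add_sum_erase _ ν h0r]
    have : ∑ n ∈ (Finset.range k).erase 0, ν n = ∑ n ∈ (Finset.range k).erase 0, μ n := by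
      apply Finset.sum_congr rfl; intro n hn
      have : n ≠ 0 := Finset.ne_of_mem_erase hn
      simp [hν, this]
    rw [this]
    have : ∑ n ∈ (Finset.range k).erase 0, μ n = j - μ 0 := by
      rw [hj, ← Finset.add_sum_erase _ μ h0r]; omega
    simp only [hν, if_pos rfl, this, hμ0]
    omega
  have hsum_lam : ∑ n ∈ Finset.range k, lam (a n) = h := by
    have := Finset.sum_congr rfl hlam_an
    rw [Finset.sum_add_distrib, hsumν] at this
    simp only [Finset.sum_const, Finset.card_range, smul_eq_mul] at this
    omega
  have hsumA : ∀ f : ℤ → ℤ, ∑ x ∈ A, f x = ∑ n ∈ Finset.range k, f (a n) := by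
    intro f
    rw [← himg, Finset.sum_image hinj]
  refine Set.mem_iUnion₂.2 ⟨h, hh, lam, ?_, ?_, ?_, ?_⟩
  · intro x
    simp only [hlam]
    split
    · omega
    · split <;> omega
  · intro x hx
    have hx0 : x ≠ 0 := fun hc => hx (hc ▸ h0A)
    simp [hlam, hx0, hx]
  · rw [← himg, Finset.sum_image hinj]
    exact hsum_lam
  · rw [← himg, Finset.sum_image hinj, Finset.sum_image hinj]
    have key : ∀ n ∈ Finset.range k, (lam (a n) : ℤ) * a n = (r:ℤ) * a n - (μ n : ℤ) * a n := by
      intro n hn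
      have h1 := hlam_an n hn
      have h2 : (lam (a n) : ℤ) = (r:ℤ) - (ν n : ℤ) := by
        have : ((lam (a n) + ν n : ℕ) : ℤ) = (r:ℤ) := by rw [h1]
        push_cast at this; omega
      by_cases hn0 : n = 0
      · subst hn0; rw [ha0]; ring
      · have : (ν n : ℤ) = (μ n : ℤ) := by simp [hν, hn0]
        rw [h2, this]; ring
    rw [Finset.sum_congr rfl key, Finset.sum_sub_distrib, ← Finset.mul_sum]


lemma mem3 (k r hmin hmax : ℕ) (A : Finset ℤ) (H : Finset ℕ) (a : ℕ → ℤ)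
    (himg : (Finset.range k).image a = A)
    (hinj : ∀ m ∈ Finset.range k, ∀ n ∈ Finset.range k, a m = a n → m = n)
    (ha0 : a 0 = 0) (hk : 2 ≤ k)
    (hminmem : hmin ∈ H) (hmaxmem : hmax ∈ H) (hd : hmax < hmin + r)
    (i1 i2 i3 c1 c2 c3 : ℕ)
    (hi1 : 1 ≤ i1) (hi1k : i1 < k) (hi2 : 1 ≤ i2) (hi2k : i2 < k)
    (hi3 : 1 ≤ i3) (hi3k : i3 < k)
    (hb : ∀ n, (if n = i1 then c1 else 0) + (if n = i2 then c2 else 0)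
      + (if n = i3 then c3 else 0) ≤ r)
    (h1 : k*r ≤ hmax + r + (c1+c2+c3)) (h2 : hmin + (c1+c2+c3) ≤ k*r) :
    ((r:ℤ) * ∑ x ∈ A, x) - ((c1:ℤ) * a i1 + (c2:ℤ) * a i2 + (c3:ℤ) * a i3)
      ∈ HSumset r H A := by
  classical
  set μ : ℕ → ℕ := fun n => (if n = i1 then c1 else 0) + (if n = i2 then c2 else 0)
      + (if n = i3 then c3 else 0) with hμ
  have hsingle : ∀ (i : ℕ), i < k → ∀ c : ℕ,
      ∑ n ∈ Finset.range k, (if n = i then c else 0) = c := by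
    intro i hi c
    rw [Finset.sum_ite_eq' (Finset.range k) i (fun _ => c)]
    simp [Finset.mem_range.2 hi]
  have hsum : ∑ n ∈ Finset.range k, μ n = c1 + c2 + c3 := by
    simp only [hμ, Finset.sum_add_distrib,
      hsingle i1 hi1k c1, hsingle i2 hi2k c2, hsingle i3 hi3k c3]
  have hval : ∑ n ∈ Finset.range k, (μ n : ℤ) * a n
      = (c1:ℤ) * a i1 + (c2:ℤ) * a i2 + (c3:ℤ) * a i3 := by
    have e1 : ∀ (i : ℕ), i < k → ∀ c : ℕ,
        ∑ n ∈ Finset.range k, ((if n = i then (c:ℤ) else 0)) * a n = (c:ℤ) * a i := by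
      intro i hi c
      simp only [ite_mul, zero_mul]
      rw [Finset.sum_ite_eq' (Finset.range k) i (fun n => (c:ℤ) * a n)]
      simp [Finset.mem_range.2 hi]
    calc ∑ n ∈ Finset.range k, (μ n : ℤ) * a n
        = ∑ n ∈ Finset.range k, ((if n = i1 then (c1:ℤ) else 0) * a n
          + (if n = i2 then (c2:ℤ) else 0) * a n + (if n = i3 then (c3:ℤ) else 0) * a n) := by
          apply Finset.sum_congr rfl; intro n _
          simp only [hμ]; push_cast; ring
      _ = (c1:ℤ) * a i1 + (c2:ℤ) * a i2 + (c3:ℤ) * a i3 := by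
          rw [Finset.sum_add_distrib, Finset.sum_add_distrib,
            e1 i1 hi1k c1, e1 i2 hi2k c2, e1 i3 hi3k c3]
  rw [← hval]
  by_cases hc : k*r ≤ hmin + r + (c1+c2+c3)
  · exact mem_core k r hmin A H a himg hinj ha0 hk hminmem μ
      (by simp [hμ]; omega) hb (by rw [hsum]; omega) (by rw [hsum]; omega)
  · exact mem_core k r hmax A H a himg hinj ha0 hk hmaxmem μ
      (by simp [hμ]; omega) hb (by rw [hsum]; omega) (by rw [hsum]; omega)


lemma exists_enum (k : ℕ) (hk : 1 ≤ k) (A : Finset ℤ) (hAcard : A.card = k)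
    (hAnonneg : ∀ x ∈ A, 0 ≤ x) (h0A : (0:ℤ) ∈ A) :
    ∃ a : ℕ → ℤ, (Finset.range k).image a = A ∧
      (∀ m n : ℕ, m < n → n < k → a m < a n) ∧ a 0 = 0 := by
  classical
  set e := A.orderEmbOfFin hAcard with he
  refine ⟨fun n => if h : n < k then e ⟨n, h⟩ else 0, ?_, ?_, ?_⟩
  · apply Finset.Subset.antisymm
    · intro x hx
      obtain ⟨n, hn, rfl⟩ := Finset.mem_image.1 hx
      rw [Finset.mem_range] at hn
      simp only [dif_pos hn]
      exact Finset.orderEmbOfFin_mem A hAcard ⟨n, hn⟩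
    · intro x hx
      have : x ∈ Set.range e := by
        rw [Finset.range_orderEmbOfFin]; exact hx
      obtain ⟨⟨n, hn⟩, rfl⟩ := this
      exact Finset.mem_image.2 ⟨n, Finset.mem_range.2 hn, by simp [dif_pos hn]⟩
  · intro m n hmn hn
    have hm : m < k := lt_trans hmn hn
    simp only [dif_pos hm, dif_pos hn]
    exact e.strictMono (by exact_mod_cast hmn)
  · have h0k : 0 < k := hk
    simp only [dif_pos h0k]
    rw [Finset.orderEmbOfFin_zero hAcard h0k]
    apply le_antisymm
    · exact Finset.min'_le A 0 h0A
    · exact Finset.le_min' A _ 0 (fun y hy => hAnonneg y hy)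

lemma hsumset_finite (r : ℕ) (H : Finset ℕ) (A : Finset ℤ)
    (hAnonneg : ∀ x ∈ A, 0 ≤ x) :
    HSumset r H A ⊆ Set.Icc 0 ((r:ℤ) * ∑ x ∈ A, x) := by
  intro x hx
  obtain ⟨h, -, lam, hle, -, -, hval⟩ := Set.mem_iUnion₂.1 hx
  constructor
  · rw [← hval]
    apply Finset.sum_nonneg
    intro i hi
    exact mul_nonneg (by positivity) (hAnonneg i hi)
  · rw [← hval, Finset.mul_sum]
    apply Finset.sum_le_sum
    intro i hi
    apply mul_le_mul_of_nonneg_right _ (hAnonneg i hi)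
    exact_mod_cast hle i



theorem stmt_12 (k t r hmin hmax : ℕ) (A : Finset ℤ) (H : Finset ℕ)
    (hk : 7 ≤ k) (hAcard : A.card = k) (hAnonneg : ∀ a ∈ A, 0 ≤ a) (h0A : (0 : ℤ) ∈ A)
    (hr2 : 2 ≤ r) (ht : 2 ≤ t) (hHcard : H.card = t) (hHpos : ∀ x ∈ H, 0 < x)
    (hHne : H.Nonempty)
    (hminH : hmin = H.min' hHne) (hmaxH : hmax = H.max' hHne)
    (hlow : (k - 2) * r - 1 < hmin) (hlt : hmin < hmax) (hup : hmax < (k - 1) * r)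
    (heq : ((HSumset r H A).ncard : ℤ) =
      ((hmin / r : ℕ) : ℤ) * r * ((k : ℤ) - ((hmin / r : ℕ) : ℤ))
        + ((hmin : ℤ) - ((hmin / r : ℕ) : ℤ) * r) * ((k : ℤ) - 2 * ((hmin / r : ℕ) : ℤ) - 1)
        + t) :
    ∃ d : ℕ, 1 ≤ d ∧ d ≤ r - 1 ∧ IsAPNat H d ∧
      IsAPInt A ((d : ℤ) * (A.erase 0).min'
        (Finset.card_pos.mp (by rw [Finset.card_erase_of_mem h0A, hAcard]; omega))) := by
  classical
  -- enumeration of A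
  obtain ⟨a, himg, amono, ha0⟩ := exists_enum k (by omega) A hAcard hAnonneg h0A
  have hinj : ∀ m ∈ Finset.range k, ∀ n ∈ Finset.range k, a m = a n → m = n := by
    intro m hm n hn hmn
    rw [Finset.mem_range] at hm hn
    by_contra hne
    rcases lt_or_gt_of_ne hne with h | h
    · exact absurd hmn (ne_of_lt (amono m n h hn))
    · exact absurd hmn.symm (ne_of_lt (amono n m h hm))
  have a1pos : 0 < a 1 := by rw [← ha0]; exact amono 0 1 one_pos (by omega)
  -- numeric setup
  have hminmem : hmin ∈ H := hminH ▸ H.min'_mem hHne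
  have hmaxmem : hmax ∈ H := hmaxH ▸ H.max'_mem hHne
  have hbr : k*r = (k-1)*r + r := by
    have h1 : (k-1+1)*r = (k-1)*r + r := Nat.succ_mul _ _
    rw [show k-1+1 = k by omega] at h1
    exact h1
  have hbr2 : (k-1)*r = (k-2)*r + r := by
    have h1 : (k-2+1)*r = (k-2)*r + r := Nat.succ_mul _ _
    rw [show k-2+1 = k-1 by omega] at h1
    exact h1
  have hX : 1 ≤ (k-2)*r := Nat.mul_pos (by omega) (by omega)
  have hlow' : (k-2)*r ≤ hmin := by omega
  set J0 : ℕ := (k-1)*r - hmax with hJ0def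
  set E : ℕ := (k-1)*r - hmin with hEdef
  have hJ0sum : J0 + hmax = (k-1)*r := by omega
  have hEsum : E + hmin = (k-1)*r := by omega
  have hJ0one : 1 ≤ J0 := by omega
  have hEr : E ≤ r := by omega
  have hE2 : 2 ≤ E := by omega
  have hJ0r : J0 + 1 ≤ r := by omega
  have hd : hmax < hmin + r := by omega
  -- t ≤ hmax - hmin + 1
  have hHsub : H ⊆ Finset.Icc hmin hmax := by
    intro x hx
    rw [Finset.mem_Icc]
    exact ⟨hminH ▸ H.min'_le x hx, hmaxH ▸ H.le_max' x hx⟩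
  have htle : t ≤ hmax + 1 - hmin := by
    have := Finset.card_le_card hHsub
    rwa [hHcard, Nat.card_Icc] at this
  -- membership of reflected chain elements
  have hmem3 := fun i1 i2 i3 c1 c2 c3 h1 h2 h3 h4 h5 h6 hb hw1 hw2 =>
    mem3 k r hmin hmax A H a himg hinj ha0 (by omega) hminmem hmaxmem hd
      i1 i2 i3 c1 c2 c3 h1 h2 h3 h4 h5 h6 hb hw1 hw2
  set σ : ℤ := ∑ x ∈ A, x with hσ
  set CC : Finset ℤ := Ca r J0 a ∪ Cb k r a ∪ Cc k r E a with hCC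
  have hchain : ∀ c ∈ CC, (r:ℤ)*σ - c ∈ HSumset r H A := by
    intro c hc
    rcases Finset.mem_union.1 hc with hc | hc
    · rcases Finset.mem_union.1 hc with hc | hc
      · obtain ⟨j, hj, rfl⟩ := Finset.mem_image.1 hc
        rw [Finset.mem_Icc] at hj
        have := hmem3 1 1 1 j 0 0 (by omega) (by omega) (by omega) (by omega)
          (by omega) (by omega)
          (by intro n; by_cases h : n = 1 <;> simp [h] <;> omega)
          (by omega) (by omega)
        convert this using 2
        push_cast
        ring
      · obtain ⟨⟨p, ii⟩, hpi, rfl⟩ := Finset.mem_image.1 hc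
        rw [Finset.mem_product, Finset.mem_Icc, Finset.mem_Icc] at hpi
        obtain ⟨⟨hp1, hp2⟩, hii1, hii2⟩ := hpi
        have := hmem3 p (p+1) 1 (r - ii) ii 0 (by omega) (by omega) (by omega)
          (by omega) (by omega) (by omega)
          (by intro n; split_ifs <;> omega)
          (by omega) (by omega)
        convert this using 2
        push_cast [Nat.cast_sub hii2]
        ring
    · obtain ⟨⟨d, q⟩, hdq, rfl⟩ := Finset.mem_image.1 hc
      rw [Finset.mem_product, Finset.mem_Icc, Finset.mem_Icc] at hdq
      obtain ⟨⟨hd1, hd2⟩, hq1, hq2⟩ := hdq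
      have := hmem3 (k-1) (k-2) q r (d-1) 1 (by omega) (by omega) (by omega)
        (by omega) (by omega) (by omega)
        (by intro n; split_ifs <;> omega)
        (by omega) (by omega)
      convert this using 2
      push_cast [Nat.cast_sub hd1]
      ring
  -- finiteness
  have hUfin : (HSumset r H A).Finite :=
    Set.Finite.subset (Set.finite_Icc 0 ((r:ℤ) * σ)) (hsumset_finite r H A hAnonneg)
  -- reflected chain as finset
  set DD : Finset ℤ := CC.image (fun c => (r:ℤ)*σ - c) with hDD
  have hDsub : ↑DD ⊆ HSumset r H A := by
    intro x hx
    rw [Finset.mem_coe, hDD, Finset.mem_image] at hx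
    obtain ⟨c, hc, rfl⟩ := hx
    exact hchain c hc
  have hDcard : DD.card = CC.card := by
    rw [hDD]
    apply Finset.card_image_of_injOn
    intro x _ y _ hxy
    have : (r:ℤ)*σ - x = (r:ℤ)*σ - y := hxy
    linarith
  have hCCcard : CC.card = (r + 1 - J0) + (k-2)*r + E*(k-2) :=
    card_C hk hr2 amono ha0 hJ0one (by omega) (by omega) hEr
  -- cardinality comparison
  have hdivr : hmin / r = k - 2 := by
    apply Nat.div_eq_of_lt_le
    · exact hlow'
    · rw [show k - 2 + 1 = k - 1 by omega]; omega
  rw [hdivr] at heq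
  have hNle : (DD.card : ℤ) ≤ ((HSumset r H A).ncard : ℤ) := by
    have h1 : DD.card ≤ (HSumset r H A).ncard := by
      rw [← Set.ncard_coe_finset]
      exact Set.ncard_le_ncard hDsub hUfin
    exact_mod_cast h1
  have hNval : (DD.card : ℤ) = ((r:ℤ) + 1 - J0) + ((k:ℤ)-2)*r + (E:ℤ)*((k:ℤ)-2) := by
    rw [hDcard, hCCcard]
    push_cast [Nat.cast_sub (show J0 ≤ r + 1 by omega), Nat.cast_sub (show 2 ≤ k by omega)]
    ring
  have hJ0z : (J0:ℤ) = ((k:ℤ)-1)*r - hmax := by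
    have : ((J0 + hmax : ℕ) : ℤ) = (((k-1)*r : ℕ) : ℤ) := by exact_mod_cast hJ0sum
    push_cast [Nat.cast_sub (show 1 ≤ k by omega)] at this
    linarith
  have hEz : (E:ℤ) = ((k:ℤ)-1)*r - hmin := by
    have : ((E + hmin : ℕ) : ℤ) = (((k-1)*r : ℕ) : ℤ) := by exact_mod_cast hEsum
    push_cast [Nat.cast_sub (show 1 ≤ k by omega)] at this
    linarith
  have hk2z : (((k-2:ℕ)) : ℤ) = (k:ℤ) - 2 := by
    push_cast [Nat.cast_sub (show 2 ≤ k by omega)]; ring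
  rw [hk2z] at heq
  -- key identity: N = RHS + (hmax - hmin - (t-1))
  have hiden : (DD.card : ℤ) = (((k:ℤ)-2) * r * ((k:ℤ) - ((k:ℤ)-2))
      + ((hmin:ℤ) - ((k:ℤ)-2)*r) * ((k:ℤ) - 2*((k:ℤ)-2) - 1) + t)
      + ((hmax:ℤ) - hmin - (t - 1)) := by
    rw [hNval, hJ0z, hEz]; ring
  have htge : (hmax:ℤ) - hmin ≤ (t:ℤ) - 1 := by
    rw [heq] at hNle
    linarith [hiden ▸ hNle]
  have hmaxeq : hmax + 1 = hmin + t := by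
    have h1 : (hmax:ℤ) + 1 ≤ (hmin:ℤ) + t := by linarith
    have h2 : hmax + 1 ≤ hmin + t := by exact_mod_cast h1
    omega
  -- equality of sets
  have hcardeq : (HSumset r H A).ncard = DD.card := by
    have h1 : ((HSumset r H A).ncard : ℤ) = (DD.card : ℤ) := by
      rw [heq, hiden]
      push_cast
      omega
    exact_mod_cast h1
  have hUeq : ↑DD = HSumset r H A := by
    apply Set.eq_of_subset_of_ncard_le hDsub _ hUfin
    rw [Set.ncard_coe_finset]
    omega
  -- rigidity extraction
  have rmem : ∀ x : ℤ, ((r:ℤ)*σ - x) ∈ HSumset r H A → x ∈ CC := by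
    intro x hx
    rw [← hUeq, Finset.mem_coe, hDD, Finset.mem_image] at hx
    obtain ⟨c, hc, hceq⟩ := hx
    have : c = x := by linarith
    rwa [← this]
  -- gaps are equal
  have hgap : ∀ i : ℕ, 1 ≤ i → i ≤ k-2 → a (i+1) - a i = a 2 - a 1 := by
    intro i
    induction i with
    | zero => intro h; omega
    | succ n ih =>
      intro h1 h2
      rcases Nat.eq_or_lt_of_le h1 with h | h
      · rw [← h]
      · have hn1 : 1 ≤ n := by omega
        have hn2 : n ≤ k - 2 := by omega
        have hprev := ih hn1 (by omega)
        -- apply rig1 at index n+1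
        have hxmem : ((r:ℤ)*σ - (a n + ((r:ℤ)-2) * a (n+1) + a (n+2))) ∈ HSumset r H A := by
          have := hmem3 n (n+1) (n+2) 1 (r-2) 1 (by omega) (by omega) (by omega)
            (by omega) (by omega) (by omega)
            (by intro m; split_ifs <;> omega)
            (by omega) (by omega)
          convert this using 2
          push_cast [Nat.cast_sub (show 2 ≤ r by omega)]
          ring
        have hcc := rmem _ hxmem
        have := rig1 hk hr2 amono ha0 (n+1) (by omega) (by omega)
          (by rw [show n+1-1 = n by omega]; exact hcc)
        rw [show n+1-1 = n by omega] at this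
        rw [show n+1+1 = n+2 by omega] at this ⊢
        linarith
  set Dv : ℤ := a 2 - a 1 with hDv
  have hap : ∀ p : ℕ, 1 ≤ p → p ≤ k-1 → a p = a 1 + ((p:ℤ)-1) * Dv := by
    intro p
    induction p with
    | zero => intro h; omega
    | succ n ih =>
      intro h1 h2
      rcases Nat.eq_or_lt_of_le h1 with h | h
      · rw [← h]; simp
      · have hn1 : 1 ≤ n := by omega
        have := hgap n hn1 (by omega)
        have hihv := ih hn1 (by omega)
        push_cast
        rw [show ((n:ℤ) + 1 - 1) = ((n:ℤ)-1) + 1 by ring]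
        have : a (n+1) = a n + Dv := by linarith
        rw [this, hihv]; ring
  -- rig2 : a 1 ≤ Dv
  have hwmem : ((r:ℤ)*σ - (((J0:ℤ)-1) * a 1 + a 2)) ∈ HSumset r H A := by
    have := hmem3 1 2 1 (J0-1) 1 0 (by omega) (by omega) (by omega)
      (by omega) (by omega) (by omega)
      (by intro m; split_ifs <;> omega)
      (by omega) (by omega)
    convert this using 2
    push_cast [Nat.cast_sub (show 1 ≤ J0 by omega)]
    ring
  have hDa : a 1 ≤ Dv := rig2 hk hr2 amono ha0 hap hJ0one hJ0r (rmem _ hwmem)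
  -- rig3 : Dv = a 1
  have hymem : ((r:ℤ)*σ - ((r:ℤ) * a 1 + a 2)) ∈ HSumset r H A := by
    have := hmem3 1 2 1 r 1 0 (by omega) (by omega) (by omega)
      (by omega) (by omega) (by omega)
      (by intro m; split_ifs <;> omega)
      (by omega) (by omega)
    convert this using 2
    push_cast
    ring
  have hDeq : Dv = a 1 := rig3 hk hr2 amono ha0 hap hDa (rmem _ hymem)
  -- A is the AP {0, a1, ..., (k-1) a1}
  have hapk : ∀ p : ℕ, p < k → a p = (p:ℤ) * a 1 := by
    intro p hp
    rcases Nat.eq_zero_or_pos p with h | h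
    · subst h; simp [ha0]
    · have := hap p h (by omega)
      rw [hDeq] at this
      rw [this]; ring
  -- min' of A.erase 0 is a 1
  have h1A : a 1 ∈ A := by
    rw [← himg]; exact Finset.mem_image_of_mem a (Finset.mem_range.2 (by omega))
  have hmin'_eq : (A.erase 0).min'
      (Finset.card_pos.mp (by rw [Finset.card_erase_of_mem h0A, hAcard]; omega)) = a 1 := by
    apply le_antisymm
    · apply Finset.min'_le
      exact Finset.mem_erase.2 ⟨ne_of_gt a1pos, h1A⟩
    · apply Finset.le_min'
      intro y hy
      rw [Finset.mem_erase] at hy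
      obtain ⟨hy0, hyA⟩ := hy
      rw [← himg, Finset.mem_image] at hyA
      obtain ⟨n, hn, rfl⟩ := hyA
      rw [Finset.mem_range] at hn
      have hn1 : 1 ≤ n := by
        by_contra hcon
        push_neg at hcon
        interval_cases n
        · exact hy0 ha0
      rcases Nat.eq_or_lt_of_le hn1 with h | h
      · rw [← h]
      · exact le_of_lt (amono 1 n h hn)
  refine ⟨1, le_rfl, by omega, ?_, ?_⟩
  · -- IsAPNat H 1
    refine ⟨hmin, ?_⟩
    have hHIcc : H = Finset.Icc hmin hmax := by
      apply Finset.eq_of_subset_of_card_le hHsub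
      rw [hHcard, Nat.card_Icc]
      omega
    rw [hHcard, hHIcc]
    ext x
    rw [Finset.mem_Icc, Finset.mem_image]
    constructor
    · rintro ⟨hx1, hx2⟩
      exact ⟨x - hmin, Finset.mem_range.2 (by omega), by omega⟩
    · rintro ⟨i, hi, rfl⟩
      rw [Finset.mem_range] at hi
      omega
  · -- IsAPInt A (1 * a1)
    rw [hmin'_eq]
    refine ⟨0, ?_⟩
    rw [hAcard, ← himg]
    apply Finset.image_congr
    intro i hi
    rw [Finset.mem_coe, Finset.mem_range] at hi
    rw [hapk i hi]
    push_cast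
    ring
end

section
/- Let k ≥ 3 and r ≥ 1 be integers, and let A = {a_1 < a_2 < ⋯ < a_k} be a set of k positive integers. Then the set Σ(𝔸) of nonempty subsequence sums of the sequence 𝔸 = (a_1,…,a_k)_r satisfies |Σ(𝔸)| ≥ r·k·(k+1)/2. -/
/-- The set `Σ_α(𝔸)` of sums of subsequences with at least `α` terms of the sequence
in which every element of `A` is repeated exactly `r` times. -/
def SubseqSums (r : ℕ) (A : Finset ℤ) (α : ℕ) : Set ℤ :=
  {x | ∃ lam : ℤ → ℕ, (∀ a, lam a ≤ r) ∧ (∀ a ∉ A, lam a = 0) ∧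
    α ≤ (∑ a ∈ A, lam a) ∧ (∑ a ∈ A, (lam a : ℤ) * a) = x}

open Finset in
lemma gauss_aux (k : ℕ) : 2 * ∑ m ∈ Finset.range k, (k - m) = k * (k + 1) := by
  induction k with
  | zero => simp
  | succ n ih =>
    have h1 : ∑ m ∈ Finset.range (n+1), (n + 1 - m)
        = (∑ m ∈ Finset.range n, (n - m)) + (n + 1) := by
      rw [Finset.sum_range_succ]
      have h2 : ∀ m ∈ Finset.range n, n + 1 - m = (n - m) + 1 := by
        intro m hm; have := Finset.mem_range.mp hm; omega
      rw [Finset.sum_congr rfl h2, Finset.sum_add_distrib, Finset.sum_const, smul_eq_mul,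
        Finset.card_range]
      omega
    rw [h1]
    nlinarith [ih]

theorem stmt_13 (k r : ℕ) (A : Finset ℤ)
    (hk : 3 ≤ k) (hr : 1 ≤ r) (hAcard : A.card = k) (hApos : ∀ a ∈ A, 0 < a) :
    r * k * (k + 1) / 2 ≤ (SubseqSums r A 1).ncard := by
  classical
  have hk0 : 0 < k := by omega
  set e := A.orderIsoOfFin hAcard with he
  set a : ℕ → ℤ := fun n => if h : n < k then (e ⟨n, h⟩ : ℤ) else 0 with ha
  have hmem : ∀ n, n < k → a n ∈ A := by
    intro n hn; simp only [ha, dif_pos hn]; exact (e ⟨n, hn⟩).2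
  have hmono : ∀ i j, i < j → j < k → a i < a j := by
    intro i j hij hj
    have hi : i < k := lt_trans hij hj
    simp only [ha, dif_pos hi, dif_pos hj]
    exact_mod_cast e.strictMono (show (⟨i, hi⟩ : Fin k) < ⟨j, hj⟩ from hij)
  have hpos : ∀ n, n < k → 0 < a n := fun n hn => hApos _ (hmem n hn)
  have hnn : ∀ n, 0 ≤ a n := by
    intro n
    by_cases hn : n < k
    · exact (hpos n hn).le
    · simp [ha, hn]
  have hainj : ∀ i, i < k → ∀ j, j < k → a i = a j → i = j := by
    intro i hi j hj hij
    rcases lt_trichotomy i j with h | h | h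
    · exact absurd hij (ne_of_lt (hmono i j h hj))
    · exact h
    · exact absurd hij.symm (ne_of_lt (hmono j i h hi))
  have hinjOn : Set.InjOn a (Finset.range k) := by
    intro x hx y hy hxy
    exact hainj x (Finset.mem_range.mp hx) y (Finset.mem_range.mp hy) hxy
  have hAim : (Finset.range k).image a = A := by
    apply Finset.eq_of_subset_of_card_le
    · intro x hx
      obtain ⟨n, hn, rfl⟩ := Finset.mem_image.mp hx
      exact hmem n (Finset.mem_range.mp hn)
    · rw [Finset.card_image_of_injOn hinjOn, Finset.card_range, hAcard]
  set T : ℤ := ∑ x ∈ A, x with hT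
  have hTsum : T = ∑ n ∈ Finset.range k, a n := by
    rw [hT, ← hAim, Finset.sum_image hinjOn]
  have hT0 : 0 < T := by
    rw [hTsum]
    apply Finset.sum_pos
    · intro n hn; exact hpos n (Finset.mem_range.mp hn)
    · exact Finset.nonempty_range_iff.mpr hk0.ne'
  set B : ℕ → ℤ := fun m => ∑ t ∈ Finset.Ico (k - m) k, a t with hB
  have hBnonneg : ∀ m, 0 ≤ B m := fun m => Finset.sum_nonneg fun t _ => hnn t
  have hBmono : ∀ m m', m ≤ m' → B m ≤ B m' := by
    intro m m' hmm
    apply Finset.sum_le_sum_of_subset_of_nonneg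
    · exact Finset.Ico_subset_Ico (by omega) le_rfl
    · intro t _ _; exact hnn t
  have hBk : B k = T := by
    rw [hTsum, Finset.range_eq_Ico]
    show ∑ t ∈ Finset.Ico (k - k) k, a t = _
    rw [Nat.sub_self]
  have hBstep : ∀ m, m < k → B (m + 1) = a (k - 1 - m) + B m := by
    intro m hm
    have h1 : k - (m + 1) < k := by omega
    have e1 : k - (m + 1) = k - 1 - m := by omega
    have e2 : k - (m + 1) + 1 = k - m := by omega
    show ∑ t ∈ Finset.Ico (k - (m + 1)) k, a t
      = a (k - 1 - m) + ∑ t ∈ Finset.Ico (k - m) k, a t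
    rw [Finset.sum_eq_sum_Ico_succ_bot h1, e2, e1]
  have hsub : ∀ m i, m < k → i < k - m → B m + a i ≤ B (m + 1) := by
    intro m i hm hi
    rw [hBstep m hm]
    have hle : i ≤ k - 1 - m := by omega
    rcases eq_or_lt_of_le hle with h | h
    · rw [h]; ring_nf; exact le_refl _
    · have := hmono i (k - 1 - m) h (by omega)
      linarith
  have hsT : ∀ m i, m < k → i < k - m → B m + a i ≤ T := by
    intro m i hm hi
    calc B m + a i ≤ B (m + 1) := hsub m i hm hi
    _ ≤ B k := hBmono _ _ (by omega)
    _ = T := hBk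
  -- membership
  have hmemS : ∀ j m i, j < r → m < k → i < k - m →
      (j : ℤ) * T + (B m + a i) ∈ SubseqSums r A 1 := by
    intro j m i hj hm hi
    have hik : i < k := by omega
    set Ssub : Finset ℤ := insert (a i) ((Finset.Ico (k - m) k).image a) with hSsub
    have hSsubA : Ssub ⊆ A := by
      rw [hSsub]
      apply Finset.insert_subset (hmem i hik)
      intro x hx
      obtain ⟨t, ht, rfl⟩ := Finset.mem_image.mp hx
      exact hmem t (Finset.mem_Ico.mp ht).2
    have hnotmem : a i ∉ (Finset.Ico (k - m) k).image a := by
      intro hcontra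
      obtain ⟨t, ht, hta⟩ := Finset.mem_image.mp hcontra
      have ht' := Finset.mem_Ico.mp ht
      have := hainj t ht'.2 i hik hta
      omega
    have hSsum : ∑ x ∈ Ssub, x = a i + B m := by
      rw [hSsub, Finset.sum_insert hnotmem, Finset.sum_image]
      intro x hx y hy hxy
      exact hainj x (Finset.mem_Ico.mp hx).2 y (Finset.mem_Ico.mp hy).2 hxy
    set lam : ℤ → ℕ := fun x => if x ∈ Ssub then j + 1 else if x ∈ A then j else 0
      with hlam
    have hlamai : lam (a i) = j + 1 := by
      rw [hlam]; simp [hSsub]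
    refine ⟨lam, ?_, ?_, ?_, ?_⟩
    · intro x; rw [hlam]; dsimp only; split_ifs <;> omega
    · intro x hx
      have hxs : x ∉ Ssub := fun hc => hx (hSsubA hc)
      rw [hlam]; simp [hxs, hx]
    · calc (1 : ℕ) ≤ lam (a i) := by rw [hlamai]; omega
      _ ≤ _ := Finset.single_le_sum (f := lam) (fun x _ => Nat.zero_le _) (hmem i hik)
    · have hcongr : ∀ x ∈ A,
          ((lam x : ℕ) : ℤ) * x
          = (j : ℤ) * x + (if x ∈ Ssub then x else 0) := by
        intro x hx
        by_cases hxs : x ∈ Ssub <;> rw [hlam] <;> simp [hxs, hx] <;> push_cast <;> ring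
      rw [Finset.sum_congr rfl hcongr, Finset.sum_add_distrib, ← Finset.mul_sum,
        ← Finset.sum_filter]
      have hfilter : A.filter (· ∈ Ssub) = Ssub := by
        ext x
        simp only [Finset.mem_filter]
        exact ⟨fun h => h.2, fun h => ⟨hSsubA h, h⟩⟩
      rw [hfilter, hSsum, ← hT]
      ring
  -- strict lex monotonicity
  have flt : ∀ (j1 : ℕ) (m1 i1 : ℕ) (j2 : ℕ) (m2 i2 : ℕ), m1 < k → i1 < k - m1 → m2 < k → i2 < k - m2 →
      (j1 < j2 ∨ (j1 = j2 ∧ (m1 < m2 ∨ (m1 = m2 ∧ i1 < i2)))) →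
      (j1 : ℤ) * T + (B m1 + a i1) < (j2 : ℤ) * T + (B m2 + a i2) := by
    intro j1 m1 i1 j2 m2 i2 hm1 hi1 hm2 hi2 hlex
    rcases hlex with hj | ⟨rfl, hm | ⟨rfl, hii⟩⟩
    · have h1 : B m1 + a i1 ≤ T := hsT m1 i1 hm1 hi1
      have h2 : 0 < B m2 + a i2 :=
        add_pos_of_nonneg_of_pos (hBnonneg m2) (hpos i2 (by omega))
      have h3 : ((j1 : ℤ) + 1) * T ≤ (j2 : ℤ) * T := by
        apply mul_le_mul_of_nonneg_right _ hT0.le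
        have : (j1 : ℤ) < (j2 : ℤ) := by exact_mod_cast hj
        omega
      linarith
    · have h1 : B m1 + a i1 ≤ B (m1 + 1) := hsub m1 i1 hm1 hi1
      have h2 : B (m1 + 1) ≤ B m2 := hBmono _ _ (by omega)
      have h3 : 0 < a i2 := hpos i2 (by omega)
      linarith
    · have := hmono i1 i2 hii (by omega)
      linarith
  -- the index set and injection
  set I : Finset ((_ : ℕ) × ℕ) := (Finset.range k).sigma (fun m => Finset.range (k - m)) with hI
  set J : Finset (ℕ × (_ : ℕ) × ℕ) := (Finset.range r) ×ˢ I with hJ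
  set f : ℕ × (_ : ℕ) × ℕ → ℤ := fun p => (p.1 : ℤ) * T + (B p.2.1 + a p.2.2) with hf
  have hJmem : ∀ p ∈ J, p.1 < r ∧ p.2.1 < k ∧ p.2.2 < k - p.2.1 := by
    intro p hp
    rw [hJ, Finset.mem_product, hI, Finset.mem_sigma] at hp
    exact ⟨Finset.mem_range.mp hp.1, Finset.mem_range.mp hp.2.1, Finset.mem_range.mp hp.2.2⟩
  have hinjJ : Set.InjOn f J := by
    intro p hp q hq hfe
    obtain ⟨hp1, hp2, hp3⟩ := hJmem p hp
    obtain ⟨hq1, hq2, hq3⟩ := hJmem q hq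
    obtain ⟨j1, m1, i1⟩ := p
    obtain ⟨j2, m2, i2⟩ := q
    simp only at hp1 hp2 hp3 hq1 hq2 hq3
    have key : j1 = j2 ∧ m1 = m2 ∧ i1 = i2 := by
      rcases Nat.lt_trichotomy j1 j2 with h | rfl | h
      · exact absurd hfe (ne_of_lt (flt j1 m1 i1 j2 m2 i2 hp2 hp3 hq2 hq3 (Or.inl h)))
      · rcases Nat.lt_trichotomy m1 m2 with h | rfl | h
        · exact absurd hfe (ne_of_lt (flt j1 m1 i1 j1 m2 i2 hp2 hp3 hq2 hq3
            (Or.inr ⟨rfl, Or.inl h⟩)))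
        · rcases Nat.lt_trichotomy i1 i2 with h | rfl | h
          · exact absurd hfe (ne_of_lt (flt j1 m1 i1 j1 m1 i2 hp2 hp3 hq2 hq3
              (Or.inr ⟨rfl, Or.inr ⟨rfl, h⟩⟩)))
          · exact ⟨rfl, rfl, rfl⟩
          · exact absurd hfe.symm (ne_of_lt (flt j1 m1 i2 j1 m1 i1 hq2 hq3 hp2 hp3
              (Or.inr ⟨rfl, Or.inr ⟨rfl, h⟩⟩)))
        · exact absurd hfe.symm (ne_of_lt (flt j1 m2 i2 j1 m1 i1 hq2 hq3 hp2 hp3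
            (Or.inr ⟨rfl, Or.inl h⟩)))
      · exact absurd hfe.symm (ne_of_lt (flt j2 m2 i2 j1 m1 i1 hq2 hq3 hp2 hp3 (Or.inl h)))
    obtain ⟨rfl, rfl, rfl⟩ := key
    rfl
  set F : Finset ℤ := J.image f with hF
  have hFcard : F.card = r * ∑ m ∈ Finset.range k, (k - m) := by
    rw [hF, Finset.card_image_of_injOn hinjJ, hJ, Finset.card_product, hI,
      Finset.card_sigma, Finset.card_range]
    congr 1
    exact Finset.sum_congr rfl fun m _ => Finset.card_range _
  have hFsub : ↑F ⊆ SubseqSums r A 1 := by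
    intro x hx
    obtain ⟨p, hp, rfl⟩ := Finset.mem_image.mp hx
    obtain ⟨h1, h2, h3⟩ := hJmem p hp
    exact hmemS p.1 p.2.1 p.2.2 h1 h2 h3
  have hfin : (SubseqSums r A 1).Finite := by
    apply Set.Finite.subset (Set.finite_Ioc (0 : ℤ) ((r : ℤ) * T))
    rintro x ⟨lam, hlam1, hlam2, hlam3, hlam4⟩
    constructor
    · -- 0 < x
      have hex : ∃ a0 ∈ A, lam a0 ≠ 0 := by
        by_contra hc
        push_neg at hc
        have : ∑ a ∈ A, lam a = 0 := Finset.sum_eq_zero hc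
        omega
      obtain ⟨a0, ha0A, ha0⟩ := hex
      have hterm : 0 < (lam a0 : ℤ) * a0 :=
        mul_pos (by exact_mod_cast Nat.pos_of_ne_zero ha0) (hApos a0 ha0A)
      calc (0 : ℤ) < (lam a0 : ℤ) * a0 := hterm
      _ ≤ ∑ a ∈ A, (lam a : ℤ) * a := by
          apply Finset.single_le_sum _ ha0A
          intro b hb
          exact mul_nonneg (by positivity) (hApos b hb).le
      _ = x := hlam4
    · -- x ≤ r * T
      rw [← hlam4, hT, Finset.mul_sum]
      apply Finset.sum_le_sum
      intro b hb
      apply mul_le_mul_of_nonneg_right _ (hApos b hb).le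
      exact_mod_cast hlam1 b
  have hchain : r * ∑ m ∈ Finset.range k, (k - m) ≤ (SubseqSums r A 1).ncard := by
    rw [← hFcard, ← Set.ncard_coe_finset]
    exact Set.ncard_le_ncard hFsub hfin
  have h2 : r * k * (k + 1) = 2 * (r * ∑ m ∈ Finset.range k, (k - m)) := by
    have := gauss_aux k
    calc r * k * (k + 1) = r * (k * (k + 1)) := by ring
    _ = r * (2 * ∑ m ∈ Finset.range k, (k - m)) := by rw [this]
    _ = 2 * (r * ∑ m ∈ Finset.range k, (k - m)) := by ring
  rw [h2, Nat.mul_div_cancel_left _ two_pos]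
  exact hchain
end

section
/- Let k ≥ 4 and r ≥ 1 be integers, and let A = {a_1 < a_2 < ⋯ < a_k} be a set of k nonnegative integers with 0 ∈ A. Then the set Σ(𝔸) of nonempty subsequence sums of the sequence 𝔸 = (a_1,…,a_k)_r satisfies |Σ(𝔸)| ≥ 1 + r·k·(k−1)/2. -/
open Finset

theorem card_image_range_product_mul_add {n : ℕ} {a : ℤ} {D : Finset ℤ} (ha : 0 < a)
    (hD : ∀ x ∈ D, 0 ≤ x ∧ x < a) :
    ((range n ×ˢ D).image fun p => (p.1 : ℤ) * a + p.2).card = n * D.card := by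
  rw [card_image_of_injOn, card_product, card_range]
  have hdiv : ∀ p ∈ range n ×ˢ D,
      ((p.1 : ℤ) * a + p.2) / a = p.1 ∧ ((p.1 : ℤ) * a + p.2) % a = p.2 := fun p hp =>
    (Int.ediv_emod_unique ha).2 ⟨by ring, hD p.2 (mem_product.1 hp).2⟩
  intro p hp q hq hpq
  have hp' := hdiv p hp
  have hq' := hdiv q hq
  simp only at hpq
  rw [hpq] at hp'
  exact Prod.ext (by exact_mod_cast hp'.1.symm.trans hq'.1) (hp'.2.symm.trans hq'.2)

section
variable {r α : ℕ} {B : Finset ℤ}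

theorem zero_mem_subseqSums : (0 : ℤ) ∈ SubseqSums r B 0 :=
  ⟨fun _ => 0, fun _ => Nat.zero_le r, fun _ _ => rfl, Nat.zero_le _, by simp⟩

theorem subseqSums_anti {β : ℕ} (h : α ≤ β) : SubseqSums r B β ⊆ SubseqSums r B α :=
  fun _ ⟨lam, hr, hB, hβ, hx⟩ => ⟨lam, hr, hB, h.trans hβ, hx⟩

theorem nonneg_of_mem_subseqSums (hB : ∀ b ∈ B, 0 ≤ b) {x : ℤ}
    (hx : x ∈ SubseqSums r B α) : 0 ≤ x := by
  obtain ⟨lam, -, -, -, rfl⟩ := hx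
  exact sum_nonneg fun b hb => mul_nonneg (Nat.cast_nonneg _) (hB b hb)

theorem subseqSums_finite : (SubseqSums r B α).Finite := by
  refine (Set.finite_Icc (-(r * ∑ b ∈ B, |b|)) (r * ∑ b ∈ B, |b|)).subset ?_
  rintro _ ⟨lam, hr, -, -, rfl⟩
  rw [Set.mem_Icc, ← abs_le, mul_sum]
  refine (abs_sum_le_sum_abs _ _).trans (sum_le_sum fun b _ => ?_)
  rw [abs_mul, Nat.abs_cast]
  exact mul_le_mul_of_nonneg_right (by exact_mod_cast hr b) (abs_nonneg b)

theorem add_mul_mem_subseqSums_insert {a x : ℤ} {t : ℕ} (ha : a ∉ B) (ht : t ≤ r)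
    (hx : x ∈ SubseqSums r B α) : t * a + x ∈ SubseqSums r (insert a B) (α + t) := by
  obtain ⟨lam, hr, hB, hα, rfl⟩ := hx
  refine ⟨Function.update lam a t, fun b => ?_, fun b hb => ?_, ?_, ?_⟩
  · rcases eq_or_ne b a with rfl | h
    · simpa using ht
    · simpa [h] using hr b
  · rw [mem_insert, not_or] at hb
    simp [hb.1, hB b hb.2]
  · rw [sum_insert ha, sum_update_of_notMem ha, Function.update_self]
    omega
  · rw [sum_insert ha, Function.update_self]
    exact congrArg _ (sum_congr rfl fun b hb => by
      rw [Function.update_of_ne (ne_of_mem_of_not_mem hb ha)])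

theorem mem_subseqSums_of_mem (hr : 1 ≤ r) {b : ℤ} (hb : b ∈ B) : b ∈ SubseqSums r B 1 := by
  have := add_mul_mem_subseqSums_insert (notMem_erase b B) hr
    (zero_mem_subseqSums (B := B.erase b))
  rwa [insert_erase hb, Nat.cast_one, one_mul, add_zero, zero_add] at this

theorem ncard_subseqSums_add_le_insert (hr : 1 ≤ r) {a : ℤ} (ha : 0 < a)
    (hB : ∀ b ∈ B, 0 < b) (hBa : ∀ b ∈ B, b < a) :
    (SubseqSums r B 0).ncard + r * (B.card + 1) ≤ (SubseqSums r (insert a B) 0).ncard := by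
  have haB : a ∉ B := fun h => (hBa a h).false
  have hdigit : ∀ x ∈ insert 0 B, 0 ≤ x ∧ x < a := by
    simp only [mem_insert, forall_eq_or_imp]
    exact ⟨⟨le_rfl, ha⟩, fun b hb => ⟨(hB b hb).le, hBa b hb⟩⟩
  set low := (range r ×ˢ insert 0 B).image fun p => (p.1 : ℤ) * a + p.2
  set high := (fun x => (r : ℤ) * a + x) '' SubseqSums r B 0
  have hlow_card : low.card = r * (B.card + 1) := by
    rw [card_image_range_product_mul_add ha hdigit, card_insert_of_notMem fun h => (hB 0 h).false]
  have hlow_lt : ∀ y ∈ low, y < r * a := by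
    simp only [low, mem_image, mem_product, mem_range]
    rintro _ ⟨⟨t, x⟩, ⟨ht, hx⟩, rfl⟩
    have ht' : (t : ℤ) + 1 ≤ r := by exact_mod_cast ht
    nlinarith [hdigit x hx]
  have hlow_sub : ↑low ⊆ SubseqSums r (insert a B) 0 := by
    simp only [low, coe_image, Set.image_subset_iff]
    rintro ⟨t, x⟩ hp
    obtain ⟨ht, hx⟩ := mem_product.1 hp
    have hxS : x ∈ SubseqSums r B 0 := by
      rcases mem_insert.1 hx with rfl | hx
      · exact zero_mem_subseqSums
      · exact subseqSums_anti (Nat.zero_le 1) (mem_subseqSums_of_mem hr hx)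
    exact subseqSums_anti (Nat.zero_le _)
      (add_mul_mem_subseqSums_insert haB (mem_range.1 ht).le hxS)
  have hhigh_sub : high ⊆ SubseqSums r (insert a B) 0 := by
    rintro _ ⟨x, hx, rfl⟩
    exact subseqSums_anti (Nat.zero_le _) (add_mul_mem_subseqSums_insert haB le_rfl hx)
  have hdisj : Disjoint high ↑low := by
    refine Set.disjoint_left.2 ?_
    rintro _ ⟨x, hx, rfl⟩ hlow
    have := hlow_lt _ hlow
    linarith [nonneg_of_mem_subseqSums (fun b hb => (hB b hb).le) hx]
  calc (SubseqSums r B 0).ncard + r * (B.card + 1) = high.ncard + (low : Set ℤ).ncard := by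
        rw [Set.ncard_image_of_injective _ (add_right_injective _), Set.ncard_coe_finset,
          hlow_card]
    _ = (high ∪ ↑low).ncard :=
        (Set.ncard_union_eq hdisj (subseqSums_finite.image _) low.finite_toSet).symm
    _ ≤ _ := Set.ncard_le_ncard (Set.union_subset hhigh_sub hlow_sub) subseqSums_finite

theorem one_add_mul_choose_le_ncard_subseqSums (hr : 1 ≤ r) (hB : ∀ b ∈ B, 0 < b) :
    1 + r * (B.card + 1).choose 2 ≤ (SubseqSums r B 0).ncard := by
  induction B using Finset.induction_on_max with
  | empty =>
    exact (Set.ncard_pos subseqSums_finite).2 ⟨0, zero_mem_subseqSums⟩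
  | insert a B hmax ih =>
    have hB' : ∀ b ∈ B, 0 < b := fun b hb => hB b (mem_insert_of_mem hb)
    have step := ncard_subseqSums_add_le_insert hr (hB a (mem_insert_self a B)) hB' hmax
    rw [card_insert_of_notMem fun h => (hmax a h).false, Nat.choose_succ_succ',
      Nat.choose_one_right, mul_add]
    linarith [ih hB']

end

theorem stmt_14_general (k r : ℕ) (A : Finset ℤ)
    (hr : 1 ≤ r) (hAcard : A.card = k)
    (hAnonneg : ∀ a ∈ A, 0 ≤ a) (h0A : (0 : ℤ) ∈ A) :
    1 + r * k * (k - 1) / 2 ≤ (SubseqSums r A 1).ncard := by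
  have hB : ∀ b ∈ A.erase 0, 0 < b := fun b hb =>
    (hAnonneg b (mem_of_mem_erase hb)).lt_of_ne' (ne_of_mem_erase hb)
  have hsub : SubseqSums r (A.erase 0) 0 ⊆ SubseqSums r A 1 := fun x hx => by
    simpa [insert_erase h0A] using add_mul_mem_subseqSums_insert (notMem_erase 0 A) hr hx
  calc 1 + r * k * (k - 1) / 2 = 1 + r * k.choose 2 := by
        rw [Nat.choose_two_right, mul_assoc, Nat.mul_div_assoc _ (Nat.even_mul_pred_self k).two_dvd]
    _ ≤ (SubseqSums r (A.erase 0) 0).ncard := by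
        rw [← hAcard, ← card_erase_add_one h0A]
        exact one_add_mul_choose_le_ncard_subseqSums hr hB
    _ ≤ (SubseqSums r A 1).ncard := Set.ncard_le_ncard hsub subseqSums_finite

theorem stmt_14 (k r : ℕ) (A : Finset ℤ)
    (hk : 4 ≤ k) (hr : 1 ≤ r) (hAcard : A.card = k)
    (hAnonneg : ∀ a ∈ A, 0 ≤ a) (h0A : (0 : ℤ) ∈ A) :
    1 + r * k * (k - 1) / 2 ≤ (SubseqSums r A 1).ncard :=
  stmt_14_general k r A hr hAcard hAnonneg h0A
end

section
/- Let k ≥ 6 and r ≥ 1 be integers, and let A = {a_1 < a_2 < ⋯ < a_k} be a set of k positive integers. If the set Σ(𝔸) of nonempty subsequence sums of the sequence 𝔸 = (a_1,…,a_k)_r satisfies |Σ(𝔸)| = r·k·(k+1)/2, then A = d∗[1,k] for some positive integer d. -/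
namespace Stmt15Aux

def gval (k r : ℕ) (a : ℕ → ℤ) (t s j : ℕ) : ℤ :=
  (r : ℤ) * (∑ i ∈ Finset.Ico (t+1) k, a i) + (s : ℤ) * a t + a j

lemma gauss (k : ℕ) : 2 * (∑ t ∈ Finset.range k, (t+1)) = k * (k+1) := by
  induction k with
  | zero => simp
  | succ n ih => rw [Finset.sum_range_succ, Nat.mul_add, ih]; ring

lemma mem2 {k r : ℕ} {A : Finset ℤ} {a : ℕ → ℤ}
    (hm : ∀ i j, i < j → j < k → a i < a j)
    (hA : A = (Finset.range k).image a)
    (c0 c1 i0 i1 : ℕ) (h01 : i0 < i1) (hi1 : i1 < k)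
    (hc0 : c0 ≤ r) (hc1 : c1 ≤ r) (hc : 1 ≤ c0) :
    (c0 : ℤ) * a i0 + (c1 : ℤ) * a i1 ∈ SubseqSums r A 1 := by
  classical
  have hne : a i0 ≠ a i1 := ne_of_lt (hm i0 i1 h01 hi1)
  have h0A : a i0 ∈ A := by
    rw [hA]; exact Finset.mem_image_of_mem a (Finset.mem_range.2 (h01.trans hi1))
  have h1A : a i1 ∈ A := by
    rw [hA]; exact Finset.mem_image_of_mem a (Finset.mem_range.2 hi1)
  refine ⟨fun z => (if z = a i0 then c0 else 0) + (if z = a i1 then c1 else 0),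
    ?_, ?_, ?_, ?_⟩
  · intro z; dsimp only
    split_ifs with h1 h2
    · exact absurd (h1.symm.trans h2) hne
    all_goals omega
  · intro z hz
    have h1 : z ≠ a i0 := fun h => hz (h ▸ h0A)
    have h2 : z ≠ a i1 := fun h => hz (h ▸ h1A)
    simp [h1, h2]
  · rw [Finset.sum_add_distrib, Finset.sum_ite_eq' A (a i0) (fun _ => c0),
      Finset.sum_ite_eq' A (a i1) (fun _ => c1), if_pos h0A, if_pos h1A]
    omega
  · have hsplit : ∀ z ∈ A,
        (((if z = a i0 then c0 else 0) + (if z = a i1 then c1 else 0) : ℕ) : ℤ) * z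
        = (if z = a i0 then (c0:ℤ) * z else 0) + (if z = a i1 then (c1:ℤ) * z else 0) := by
      intro z _
      push_cast [apply_ite (Nat.cast : ℕ → ℤ)]
      simp only [add_mul, ite_mul, zero_mul]
    rw [Finset.sum_congr rfl hsplit, Finset.sum_add_distrib,
        Finset.sum_ite_eq' A (a i0), Finset.sum_ite_eq' A (a i1), if_pos h0A, if_pos h1A]

lemma gmem {k r : ℕ} {A : Finset ℤ} {a : ℕ → ℤ}
    (hm : ∀ i j, i < j → j < k → a i < a j)
    (hA : A = (Finset.range k).image a)
    (t s j : ℕ) (ht : t < k) (hs : s < r) (hj : j ≤ t) :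
    gval k r a t s j ∈ SubseqSums r A 1 := by
  classical
  set B := (Finset.Ico (t+1) k).image a with hB
  have hjk : j < k := lt_of_le_of_lt hj ht
  have hBA : B ⊆ A := by
    rw [hA, hB]
    exact Finset.image_subset_image (fun i hi => Finset.mem_range.2 (Finset.mem_Ico.1 hi).2)
  have hjt : a j ≤ a t := by
    rcases eq_or_lt_of_le hj with rfl | h
    · exact le_rfl
    · exact (hm _ _ h ht).le
  have htB : a t ∉ B := by
    intro hmem
    obtain ⟨i, hi, h2⟩ := Finset.mem_image.1 hmem
    exact (hm t i (Finset.mem_Ico.1 hi).1 (Finset.mem_Ico.1 hi).2).ne' h2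
  have hjB : a j ∉ B := by
    intro hmem
    obtain ⟨i, hi, h2⟩ := Finset.mem_image.1 hmem
    have h3 : a j < a i :=
      lt_of_le_of_lt hjt (hm t i (Finset.mem_Ico.1 hi).1 (Finset.mem_Ico.1 hi).2)
    exact h3.ne' h2
  have htA : a t ∈ A := by rw [hA]; exact Finset.mem_image_of_mem a (Finset.mem_range.2 ht)
  have hjA : a j ∈ A := by rw [hA]; exact Finset.mem_image_of_mem a (Finset.mem_range.2 hjk)
  refine ⟨fun z => (if z ∈ B then r else 0) + (if z = a t then s else 0)
      + (if z = a j then 1 else 0), ?_, ?_, ?_, ?_⟩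
  · intro z; dsimp only
    by_cases hzB : z ∈ B
    · have hz1 : z ≠ a t := fun h => htB (h ▸ hzB)
      have hz2 : z ≠ a j := fun h => hjB (h ▸ hzB)
      simp [hzB, hz1, hz2]
    · simp only [if_neg hzB]; split_ifs <;> omega
  · intro z hz
    have h1 : z ∉ B := fun h => hz (hBA h)
    have h2 : z ≠ a t := fun h => hz (h ▸ htA)
    have h3 : z ≠ a j := fun h => hz (h ▸ hjA)
    simp [h1, h2, h3]
  · rw [Finset.sum_add_distrib, Finset.sum_ite_eq' A (a j) (fun _ => 1), if_pos hjA]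
    omega
  · have hsplit : ∀ z ∈ A,
        ((( if z ∈ B then r else 0) + (if z = a t then s else 0)
          + (if z = a j then 1 else 0) : ℕ) : ℤ) * z
        = (if z ∈ B then (r:ℤ) * z else 0) + (if z = a t then (s:ℤ) * z else 0)
          + (if z = a j then z else 0) := by
      intro z _
      push_cast [apply_ite (Nat.cast : ℕ → ℤ)]
      simp only [add_mul, ite_mul, zero_mul, one_mul]
    rw [Finset.sum_congr rfl hsplit, Finset.sum_add_distrib, Finset.sum_add_distrib,
        Finset.sum_ite_eq' A (a t), Finset.sum_ite_eq' A (a j), if_pos htA, if_pos hjA,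
        Finset.sum_ite_mem, Finset.inter_eq_right.mpr hBA]
    have hinj : ∀ x ∈ Finset.Ico (t+1) k, ∀ y ∈ Finset.Ico (t+1) k, a x = a y → x = y := by
      intro x hx y hy hxy
      rcases lt_trichotomy x y with h | h | h
      · exact absurd hxy (ne_of_lt (hm _ _ h (Finset.mem_Ico.1 hy).2))
      · exact h
      · exact absurd hxy.symm (ne_of_lt (hm _ _ h (Finset.mem_Ico.1 hx).2))
    rw [hB, Finset.sum_image hinj, ← Finset.mul_sum]
    simp only [gval]

lemma glt {k r : ℕ} {a : ℕ → ℤ} (hpos : ∀ i, i < k → 0 < a i)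
    (hm : ∀ i j, i < j → j < k → a i < a j)
    {t s j t' s' j' : ℕ} (ht : t < k) (hs : s < r) (hj : j ≤ t)
    (ht' : t' < k) (hs' : s' < r) (hj' : j' ≤ t')
    (hlex : t' < t ∨ (t' = t ∧ (s < s' ∨ (s = s' ∧ j < j')))) :
    gval k r a t s j < gval k r a t' s' j' := by
  have hmle : ∀ i i', i ≤ i' → i' < k → a i ≤ a i' := by
    intro i i' h h'
    rcases eq_or_lt_of_le h with rfl | hlt
    · exact le_rfl
    · exact (hm _ _ hlt h').le
  have hjt : a j ≤ a t := hmle _ _ hj ht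
  have hjt' : a j' ≤ a t' := hmle _ _ hj' ht'
  have h0j' : 0 < a j' := hpos _ (lt_of_le_of_lt hj' ht')
  have h0t : 0 < a t := hpos _ ht
  have h0t' : 0 < a t' := hpos _ ht'
  rcases hlex with hlt | ⟨rfl, hrest⟩
  · have hT : ∑ i ∈ Finset.Ico t k, a i = a t + ∑ i ∈ Finset.Ico (t+1) k, a i :=
      Finset.sum_eq_sum_Ico_succ_bot ht a
    have hanti : (∑ i ∈ Finset.Ico t k, a i) ≤ ∑ i ∈ Finset.Ico (t'+1) k, a i := by
      apply Finset.sum_le_sum_of_subset_of_nonneg (Finset.Ico_subset_Ico (by omega) le_rfl)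
      intro i hi _
      exact (hpos i (Finset.mem_Ico.1 hi).2).le
    have hsr : (s:ℤ) ≤ (r:ℤ) - 1 := by push_cast; omega
    have hmul : (s:ℤ) * a t ≤ ((r:ℤ) - 1) * a t := mul_le_mul_of_nonneg_right hsr h0t.le
    have hLHS : gval k r a t s j ≤ (r:ℤ) * ∑ i ∈ Finset.Ico t k, a i := by
      simp only [gval]
      rw [hT]
      have hexp : (r:ℤ) * (a t + ∑ i ∈ Finset.Ico (t+1) k, a i)
          = (r:ℤ) * a t + (r:ℤ) * ∑ i ∈ Finset.Ico (t+1) k, a i := by ring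
      rw [hexp]
      have h2 : ((r:ℤ) - 1) * a t = (r:ℤ) * a t - a t := by ring
      linarith [hmul, hjt, h2]
    have hmulT : (r:ℤ) * (∑ i ∈ Finset.Ico t k, a i)
        ≤ (r:ℤ) * ∑ i ∈ Finset.Ico (t'+1) k, a i :=
      mul_le_mul_of_nonneg_left hanti (by positivity)
    have hRHS : (r:ℤ) * (∑ i ∈ Finset.Ico (t'+1) k, a i) < gval k r a t' s' j' := by
      simp only [gval]
      have hs'0 : (0:ℤ) ≤ (s':ℤ) * a t' := mul_nonneg (by positivity) h0t'.le
      linarith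
    linarith
  · rcases hrest with hss | ⟨rfl, hjj⟩
    · simp only [gval]
      have h1 : ((s:ℤ)+1) * a t' ≤ (s':ℤ) * a t' :=
        mul_le_mul_of_nonneg_right (by push_cast; omega) h0t'.le
      have hexp : ((s:ℤ)+1) * a t' = (s:ℤ) * a t' + a t' := by ring
      linarith
    · simp only [gval]
      have := hm j j' hjj (lt_of_le_of_lt hj' ht')
      linarith

end Stmt15Aux

theorem stmt_15 (k r : ℕ) (A : Finset ℤ)
    (hk : 6 ≤ k) (hr : 1 ≤ r) (hAcard : A.card = k) (hApos : ∀ a ∈ A, 0 < a)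
    (heq : (SubseqSums r A 1).ncard = r * k * (k + 1) / 2) :
    ∃ d : ℤ, 0 < d ∧ A = (Finset.Icc (1 : ℤ) (k : ℤ)).image (fun i => d * i) := by
  classical
  obtain ⟨a, hmem, hm, hA⟩ : ∃ a : ℕ → ℤ, (∀ i, i < k → a i ∈ A) ∧
      (∀ i j, i < j → j < k → a i < a j) ∧ A = (Finset.range k).image a := by
    refine ⟨fun i => if h : i < k then A.orderEmbOfFin hAcard ⟨i, h⟩ else 0, ?_, ?_, ?_⟩
    · intro i hik
      dsimp only
      rw [dif_pos hik]
      exact Finset.orderEmbOfFin_mem A hAcard _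
    · intro i j hij hjk
      dsimp only
      rw [dif_pos (hij.trans hjk), dif_pos hjk]
      exact (A.orderEmbOfFin hAcard).strictMono (Fin.mk_lt_mk.2 hij)
    · ext z
      simp only [Finset.mem_image, Finset.mem_range]
      constructor
      · intro hz
        have hz' : z ∈ Set.range (A.orderEmbOfFin hAcard) := by
          rw [Finset.range_orderEmbOfFin]; exact hz
        obtain ⟨i, hi⟩ := hz'
        exact ⟨i.1, i.2, by rw [dif_pos i.2]; simpa using hi⟩
      · rintro ⟨i, hik, rfl⟩
        rw [dif_pos hik]
        exact Finset.orderEmbOfFin_mem A hAcard _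
  have hpos : ∀ i, i < k → 0 < a i := fun i h => hApos _ (hmem i h)
  have ha0 : 0 < a 0 := hpos 0 (by omega)
  have hmle : ∀ i j, i ≤ j → j < k → a i ≤ a j := by
    intro i j h h'
    rcases eq_or_lt_of_le h with rfl | hlt
    · exact le_rfl
    · exact (hm _ _ hlt h').le
  set I : Finset ((_ : ℕ) × ℕ × ℕ) :=
    (Finset.range k).sigma (fun t => (Finset.range r) ×ˢ (Finset.range (t+1))) with hIdef
  set g : ((_ : ℕ) × ℕ × ℕ) → ℤ := fun p => Stmt15Aux.gval k r a p.1 p.2.1 p.2.2 with hgdef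
  have hIbounds : ∀ p ∈ I, p.1 < k ∧ p.2.1 < r ∧ p.2.2 ≤ p.1 := by
    intro p hp
    rw [hIdef, Finset.mem_sigma] at hp
    obtain ⟨h1, h2⟩ := hp
    rw [Finset.mem_product] at h2
    refine ⟨Finset.mem_range.1 h1, Finset.mem_range.1 h2.1, ?_⟩
    have := Finset.mem_range.1 h2.2
    omega
  have hinj : Set.InjOn g ↑I := by
    rintro ⟨t, s, j⟩ hp ⟨t', s', j'⟩ hq hpq
    obtain ⟨ht, hs, hj⟩ := hIbounds _ (Finset.mem_coe.1 hp)
    obtain ⟨ht', hs', hj'⟩ := hIbounds _ (Finset.mem_coe.1 hq)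
    simp only [hgdef] at hpq
    have htt : t = t' := by
      by_contra hne
      rcases Nat.lt_or_ge t t' with h | h
      · exact absurd hpq (ne_of_gt (Stmt15Aux.glt hpos hm ht' hs' hj' ht hs hj (Or.inl h)))
      · have h' : t' < t := by omega
        exact absurd hpq (ne_of_lt (Stmt15Aux.glt hpos hm ht hs hj ht' hs' hj' (Or.inl h')))
    subst htt
    have hss : s = s' := by
      by_contra hne
      rcases Nat.lt_or_ge s s' with h | h
      · exact absurd hpq (ne_of_lt (Stmt15Aux.glt hpos hm ht hs hj ht hs' hj'
          (Or.inr ⟨rfl, Or.inl h⟩)))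
      · have h' : s' < s := by omega
        exact absurd hpq (ne_of_gt (Stmt15Aux.glt hpos hm ht hs' hj' ht hs hj
          (Or.inr ⟨rfl, Or.inl h'⟩)))
    subst hss
    have hjj : j = j' := by
      by_contra hne
      rcases Nat.lt_or_ge j j' with h | h
      · exact absurd hpq (ne_of_lt (Stmt15Aux.glt hpos hm ht hs hj ht hs hj'
          (Or.inr ⟨rfl, Or.inr ⟨rfl, h⟩⟩)))
      · have h' : j' < j := by omega
        exact absurd hpq (ne_of_gt (Stmt15Aux.glt hpos hm ht hs hj' ht hs hj
          (Or.inr ⟨rfl, Or.inr ⟨rfl, h'⟩⟩)))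
    subst hjj
    rfl
  have hcardI2 : 2 * I.card = r * (k * (k+1)) := by
    rw [hIdef, Finset.card_sigma]
    have : ∀ t ∈ Finset.range k, ((Finset.range r) ×ˢ (Finset.range (t+1))).card = r * (t+1) := by
      intro t _
      rw [Finset.card_product, Finset.card_range, Finset.card_range]
    rw [Finset.sum_congr rfl this, ← Finset.mul_sum]
    calc 2 * (r * ∑ t ∈ Finset.range k, (t+1)) = r * (2 * ∑ t ∈ Finset.range k, (t+1)) := by ring
    _ = r * (k * (k+1)) := by rw [Stmt15Aux.gauss]
  have hSfin : (SubseqSums r A 1).Finite := by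
    apply Set.Finite.subset (Set.finite_Icc (0:ℤ) ((r:ℤ) * ∑ z ∈ A, z))
    intro x hx
    obtain ⟨lam, hlr, hsupp, hone, hsum⟩ := hx
    rw [← hsum]
    refine Set.mem_Icc.2 ⟨?_, ?_⟩
    · apply Finset.sum_nonneg
      intro z hz
      exact mul_nonneg (by positivity) (hApos z hz).le
    · rw [Finset.mul_sum]
      apply Finset.sum_le_sum
      intro z hz
      exact mul_le_mul_of_nonneg_right (by exact_mod_cast hlr z) (hApos z hz).le
  have hFsub : ↑(I.image g) ⊆ SubseqSums r A 1 := by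
    intro x hx
    obtain ⟨p, hp, rfl⟩ := Finset.mem_image.1 (Finset.mem_coe.1 hx)
    obtain ⟨h1, h2, h3⟩ := hIbounds p hp
    exact Stmt15Aux.gmem hm hA p.1 p.2.1 p.2.2 h1 h2 h3
  have hSC : ↑(I.image g) = SubseqSums r A 1 := by
    apply Set.eq_of_subset_of_ncard_le hFsub _ hSfin
    rw [heq, Set.ncard_coe_finset, Finset.card_image_of_injOn hinj]
    have h' : r * k * (k+1) = 2 * I.card := by rw [mul_assoc, ← hcardI2]
    omega
  have hkey : ∀ x ∈ SubseqSums r A 1, ∃ t s j, t < k ∧ s < r ∧ j ≤ t ∧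
      x = Stmt15Aux.gval k r a t s j := by
    intro x hx
    rw [← hSC] at hx
    obtain ⟨p, hp, hpx⟩ := Finset.mem_image.1 (Finset.mem_coe.1 hx)
    obtain ⟨h1, h2, h3⟩ := hIbounds p hp
    exact ⟨p.1, p.2.1, p.2.2, h1, h2, h3, hpx.symm⟩
  have hsmall : ∀ x ∈ SubseqSums r A 1, x < a 0 + a (k-1) → ∃ i, i < k ∧ x = a i := by
    intro x hx hlt
    obtain ⟨t, s, j, ht, hs, hj, rfl⟩ := hkey x hx
    have hjk : j < k := lt_of_le_of_lt hj ht
    have haj : a 0 ≤ a j := hmle 0 j (Nat.zero_le _) hjk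
    by_cases hts : t = k - 1 ∧ s = 0
    · obtain ⟨h1, h2⟩ := hts
      subst h1; subst h2
      refine ⟨j, hjk, ?_⟩
      have hIco : Finset.Ico (k - 1 + 1) k = ∅ := by
        rw [show k-1+1 = k by omega]
        exact Finset.Ico_self k
      simp [Stmt15Aux.gval, hIco]
    · exfalso
      have hge : a 0 + a (k-1) ≤ Stmt15Aux.gval k r a t s j := by
        by_cases ht' : t = k - 1
        · have hs1 : 1 ≤ s := by
            rcases Nat.eq_zero_or_pos s with rfl | h
            · exact absurd ⟨ht', rfl⟩ hts
            · exact h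
          subst ht'
          have hIco : Finset.Ico (k - 1 + 1) k = ∅ := by
            rw [show k-1+1 = k by omega]
            exact Finset.Ico_self k
          simp only [Stmt15Aux.gval, hIco, Finset.sum_empty, mul_zero, zero_add]
          have h1 : (1:ℤ) ≤ (s:ℤ) := by exact_mod_cast hs1
          have h2 : (1:ℤ) * a (k-1) ≤ (s:ℤ) * a (k-1) :=
            mul_le_mul_of_nonneg_right h1 (hpos (k-1) (by omega)).le
          rw [one_mul] at h2
          linarith
        · have htk : t + 1 ≤ k - 1 := by omega
          simp only [Stmt15Aux.gval]
          have hTge : a (k-1) ≤ ∑ i ∈ Finset.Ico (t+1) k, a i := by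
            apply Finset.single_le_sum (f := a)
              (fun i hi => (hpos i (Finset.mem_Ico.1 hi).2).le)
            exact Finset.mem_Ico.2 ⟨by omega, by omega⟩
          have hT0 : (0:ℤ) ≤ ∑ i ∈ Finset.Ico (t+1) k, a i :=
            le_trans (hpos (k-1) (by omega)).le hTge
          have hrT : (1:ℤ) * (∑ i ∈ Finset.Ico (t+1) k, a i)
              ≤ (r:ℤ) * ∑ i ∈ Finset.Ico (t+1) k, a i :=
            mul_le_mul_of_nonneg_right (by exact_mod_cast hr) hT0
          rw [one_mul] at hrT
          have hst : (0:ℤ) ≤ (s:ℤ) * a t := mul_nonneg (by positivity) (hpos t ht).le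
          linarith
      linarith
  have hsingle : ∀ j, (1 ≤ j ∨ 2 ≤ r) → j < k - 1 → ∃ i, i < k ∧ a 0 + a j = a i := by
    intro j hcond hjk1
    have hjk : j < k := by omega
    have hmemS : a 0 + a j ∈ SubseqSums r A 1 := by
      rcases Nat.eq_zero_or_pos j with rfl | hj1
      · have hr2 : 2 ≤ r := by
          rcases hcond with h | h
          · omega
          · exact h
        have h := Stmt15Aux.mem2 hm hA 2 0 0 1 (by omega) (by omega) hr2 (by omega) (by omega)
        have e : ((2:ℕ):ℤ) * a 0 + ((0:ℕ):ℤ) * a 1 = a 0 + a 0 := by push_cast; ring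
        rwa [e] at h
      · have h := Stmt15Aux.mem2 hm hA 1 1 0 j hj1 hjk hr hr le_rfl
        have e : ((1:ℕ):ℤ) * a 0 + ((1:ℕ):ℤ) * a j = a 0 + a j := by push_cast; ring
        rwa [e] at h
    apply hsmall _ hmemS
    have : a j < a (k-1) := hm j (k-1) (by omega) (by omega)
    linarith
  have hstep : ∀ j, (1 ≤ j ∨ 2 ≤ r) → j < k - 1 → a 0 + a j = a (j+1) := by
    have main : ∀ m j, (1 ≤ j ∨ 2 ≤ r) → j < k - 1 → k - 2 - j = m → a 0 + a j = a (j+1) := by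
      intro m
      induction m with
      | zero =>
        intro j hcond hjk hm0
        obtain ⟨i, hik, hie⟩ := hsingle j hcond hjk
        have hlt : a j < a i := by rw [← hie]; linarith
        have hi1 : j < i := by
          by_contra hcon
          push_neg at hcon
          exact absurd hlt (not_lt.2 (hmle i j hcon (by omega)))
        have hieq : i = j + 1 := by omega
        rw [hie, hieq]
      | succ n ih =>
        intro j hcond hjk hm0
        have hj2 : j + 1 < k - 1 := by omega
        have hihyp := ih (j+1) (Or.inl (by omega)) hj2 (by omega)
        obtain ⟨i, hik, hie⟩ := hsingle j hcond hjk
        have hlt : a j < a i := by rw [← hie]; linarith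
        have hi1 : j < i := by
          by_contra hcon
          push_neg at hcon
          exact absurd hlt (not_lt.2 (hmle i j hcon (by omega)))
        have hlt2 : a i < a (j+1+1) := by
          rw [← hie, ← hihyp]
          have := hm j (j+1) (by omega) (by omega)
          linarith
        have hi2 : i < j + 2 := by
          by_contra hcon
          push_neg at hcon
          exact absurd hlt2 (not_lt.2 (hmle (j+2) i hcon hik))
        have hieq : i = j + 1 := by omega
        rw [hie, hieq]
    intro j hcond hjk
    exact main (k - 2 - j) j hcond hjk rfl
  have ha1 : a 1 = a 0 + a 0 := by
    rcases Nat.lt_or_ge r 2 with hr1 | hr2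
    · -- r = 1 case
      have hre : r = 1 := by omega
      subst hre
      have haLin : ∀ j, 1 ≤ j → j < k → a j = a 1 + ((j:ℤ) - 1) * a 0 := by
        intro j hj1 hjk
        induction j with
        | zero => omega
        | succ n ihn =>
          rcases Nat.eq_zero_or_pos n with rfl | hn1
          · push_cast; ring
          · have hrec := hstep n (Or.inl hn1) (by omega)
            rw [← hrec, ihn hn1 (by omega)]
            push_cast; ring
      have hak1 : a (k-1) = a 1 + (k:ℤ) * a 0 - 2 * a 0 := by
        rw [haLin (k-1) (by omega) (by omega)]
        have hc : (((k-1:ℕ)):ℤ) = (k:ℤ) - 1 := by omega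
        rw [hc]; ring
      have hak2 : a (k-2) = a 1 + (k:ℤ) * a 0 - 3 * a 0 := by
        rw [haLin (k-2) (by omega) (by omega)]
        have hc : (((k-2:ℕ)):ℤ) = (k:ℤ) - 2 := by omega
        rw [hc]; ring
      have hka0 : 6 * a 0 ≤ (k:ℤ) * a 0 :=
        mul_le_mul_of_nonneg_right (by exact_mod_cast hk) ha0.le
      have hZ : ∀ c : ℕ, 3 ≤ c → c ≤ k - 2 → a 1 = (c:ℤ) * a 0 → False := by
        intro c hc3 hck ha1c
        have hca0 : 3 * a 0 ≤ (c:ℤ) * a 0 :=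
          mul_le_mul_of_nonneg_right (by exact_mod_cast hc3) ha0.le
        set m := k - c + 1 with hmdef
        have hm1 : 1 ≤ m := by omega
        have hmk : m < k := by omega
        have ham : a m = (k:ℤ) * a 0 := by
          rw [haLin m hm1 hmk, ha1c]
          have hc : ((m:ℕ):ℤ) = (k:ℤ) - (c:ℤ) + 1 := by omega
          rw [hc]; ring
        have hzmem : a 1 + a m ∈ SubseqSums 1 A 1 := by
          have h := Stmt15Aux.mem2 hm hA 1 1 1 m (by omega) hmk le_rfl le_rfl le_rfl
          have e : ((1:ℕ):ℤ) * a 1 + ((1:ℕ):ℤ) * a m = a 1 + a m := by push_cast; ring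
          rwa [e] at h
        obtain ⟨t, s, j, ht, hs, hj, hrep⟩ := hkey _ hzmem
        have hs0 : s = 0 := by omega
        subst hs0
        have hjk : j < k := lt_of_le_of_lt hj ht
        rcases (show t = k - 1 ∨ t = k - 2 ∨ t + 1 ≤ k - 2 by omega) with ht1 | ht2 | ht3
        · have hIco : Finset.Ico (t+1) k = ∅ := by
            rw [ht1, show k-1+1 = k by omega]
            exact Finset.Ico_self k
          simp only [Stmt15Aux.gval, hIco, Finset.sum_empty, mul_zero, Nat.cast_zero,
            zero_mul, zero_add, add_zero] at hrep
          have haj_le : a j ≤ a (k-1) := hmle j (k-1) (by omega) (by omega)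
          linarith [hrep, ham, hak1, ha1c]
        · have hIco : Finset.Ico (t+1) k = {k-1} := by
            ext x
            simp only [Finset.mem_Ico, Finset.mem_singleton]
            omega
          simp only [Stmt15Aux.gval, hIco, Finset.sum_singleton, Nat.cast_one, one_mul,
            Nat.cast_zero, zero_mul, add_zero, zero_add] at hrep
          have ej : a j = 2 * a 0 := by linarith [hrep, ham, hak1, ha1c]
          rcases Nat.eq_zero_or_pos j with rfl | hj1
          · linarith
          · have hjl := haLin j hj1 hjk
            have hja0 : 1 * a 0 ≤ (j:ℤ) * a 0 :=
              mul_le_mul_of_nonneg_right (by exact_mod_cast hj1) ha0.le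
            have hexp : ((j:ℤ) - 1) * a 0 = (j:ℤ) * a 0 - a 0 := by ring
            linarith
        · have hTge : a (k-2) + a (k-1) ≤ ∑ i ∈ Finset.Ico (t+1) k, a i := by
            have hsub : ({k-2, k-1} : Finset ℕ) ⊆ Finset.Ico (t+1) k := by
              intro x hx
              simp only [Finset.mem_insert, Finset.mem_singleton] at hx
              rw [Finset.mem_Ico]
              omega
            have h := Finset.sum_le_sum_of_subset_of_nonneg hsub
              (fun i hi _ => (hpos i (Finset.mem_Ico.1 hi).2).le)
            rwa [Finset.sum_pair (show (k-2:ℕ) ≠ k-1 by omega)] at h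
          simp only [Stmt15Aux.gval, Nat.cast_one, one_mul, Nat.cast_zero, zero_mul,
            add_zero] at hrep
          have haj : a 0 ≤ a j := hmle 0 j (by omega) hjk
          linarith [hrep, ham, hak1, hak2, ha1c]
      -- now analyze a 1 + a 2
      have ha2 : a 2 = a 1 + a 0 := by
        rw [← hstep 1 (Or.inl le_rfl) (by omega)]
        ring
      have hxmem : a 1 + a 2 ∈ SubseqSums 1 A 1 := by
        have h := Stmt15Aux.mem2 hm hA 1 1 1 2 (by omega) (by omega) le_rfl le_rfl le_rfl
        have e : ((1:ℕ):ℤ) * a 1 + ((1:ℕ):ℤ) * a 2 = a 1 + a 2 := by push_cast; ring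
        rwa [e] at h
      obtain ⟨t, s, j, ht, hs, hj, hrep⟩ := hkey _ hxmem
      have hs0 : s = 0 := by omega
      subst hs0
      have hjk : j < k := lt_of_le_of_lt hj ht
      have ha01 : a 0 < a 1 := hm 0 1 (by omega) (by omega)
      rcases (show t = k - 1 ∨ t = k - 2 ∨ t + 1 ≤ k - 2 by omega) with ht1 | ht2 | ht3
      · have hIco : Finset.Ico (t+1) k = ∅ := by
          rw [ht1, show k-1+1 = k by omega]
          exact Finset.Ico_self k
        simp only [Stmt15Aux.gval, hIco, Finset.sum_empty, mul_zero, Nat.cast_zero,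
          zero_mul, zero_add, add_zero] at hrep
        rcases Nat.eq_zero_or_pos j with rfl | hj1
        · exfalso
          have h1 : 0 < a 1 := hpos 1 (by omega)
          have h2 : 0 < a 2 := hpos 2 (by omega)
          linarith
        · have hjl := haLin j hj1 hjk
          -- a 1 = (j - 2) * a 0
          have ha1j : a 1 = ((j:ℤ) - 2) * a 0 := by
            have hexp : ((j:ℤ) - 1) * a 0 = (j:ℤ) * a 0 - a 0 := by ring
            have hexp2 : ((j:ℤ) - 2) * a 0 = (j:ℤ) * a 0 - 2 * a 0 := by ring
            linarith
          have hj4 : 4 ≤ j := by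
            by_contra hcon
            push_neg at hcon
            have h3 : ((j:ℤ) - 2) ≤ 1 := by omega
            have h4 : ((j:ℤ) - 2) * a 0 ≤ 1 * a 0 :=
              mul_le_mul_of_nonneg_right h3 ha0.le
            linarith
          set c := j - 2 with hcdef
          have hcc : ((c:ℕ):ℤ) = (j:ℤ) - 2 := by omega
          have ha1c : a 1 = (c:ℤ) * a 0 := by rw [hcc]; exact ha1j
          rcases (show c = 2 ∨ 3 ≤ c by omega) with hc2 | hc3
          · rw [ha1c, hc2]
            push_cast; ring
          · exact absurd ha1c (by intro h; exact hZ c hc3 (by omega) h)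
      · exfalso
        have hIco : Finset.Ico (t+1) k = {k-1} := by
          ext x
          simp only [Finset.mem_Ico, Finset.mem_singleton]
          omega
        simp only [Stmt15Aux.gval, hIco, Finset.sum_singleton, Nat.cast_one, one_mul,
          Nat.cast_zero, zero_mul, add_zero, zero_add] at hrep
        rcases Nat.eq_zero_or_pos j with rfl | hj1
        · -- a 1 = (k-2) a 0
          have ha1c : a 1 = (((k-2:ℕ)):ℤ) * a 0 := by
            have hc : (((k-2:ℕ)):ℤ) = (k:ℤ) - 2 := by omega
            rw [hc]
            have hexp : ((k:ℤ) - 2) * a 0 = (k:ℤ) * a 0 - 2 * a 0 := by ring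
            linarith [hrep, ha2, hak1]
          exact hZ (k-2) (by omega) (by omega) ha1c
        · have hjl := haLin j hj1 hjk
          have hja0 : 1 * a 0 ≤ (j:ℤ) * a 0 :=
            mul_le_mul_of_nonneg_right (by exact_mod_cast hj1) ha0.le
          have hexp : ((j:ℤ) - 1) * a 0 = (j:ℤ) * a 0 - a 0 := by ring
          linarith [hrep, ha2, hak1]
      · exfalso
        have hTge : a (k-2) + a (k-1) ≤ ∑ i ∈ Finset.Ico (t+1) k, a i := by
          have hsub : ({k-2, k-1} : Finset ℕ) ⊆ Finset.Ico (t+1) k := by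
            intro x hx
            simp only [Finset.mem_insert, Finset.mem_singleton] at hx
            rw [Finset.mem_Ico]
            omega
          have h := Finset.sum_le_sum_of_subset_of_nonneg hsub
            (fun i hi _ => (hpos i (Finset.mem_Ico.1 hi).2).le)
          rwa [Finset.sum_pair (show (k-2:ℕ) ≠ k-1 by omega)] at h
        simp only [Stmt15Aux.gval, Nat.cast_one, one_mul, Nat.cast_zero, zero_mul,
          add_zero] at hrep
        have haj : a 0 ≤ a j := hmle 0 j (by omega) hjk
        linarith [hrep, ha2, hak1, hak2]
    · exact (hstep 0 (Or.inr hr2) (by omega)).symm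
  have haEq : ∀ i, i < k → a i = ((i:ℤ) + 1) * a 0 := by
    intro i
    induction i with
    | zero => intro _; push_cast; ring
    | succ n ihn =>
      intro hnk
      rcases Nat.eq_zero_or_pos n with rfl | hn1
      · rw [ha1]; push_cast; ring
      · have hrec := hstep n (Or.inl hn1) (by omega)
        rw [← hrec, ihn (by omega)]
        push_cast; ring
  refine ⟨a 0, ha0, ?_⟩
  rw [hA]
  ext z
  simp only [Finset.mem_image, Finset.mem_range, Finset.mem_Icc]
  constructor
  · rintro ⟨i, hik, rfl⟩
    refine ⟨(i:ℤ) + 1, ⟨by omega, by omega⟩, ?_⟩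
    rw [haEq i hik]
    ring
  · rintro ⟨x, ⟨hx1, hxk⟩, rfl⟩
    refine ⟨x.toNat - 1, by omega, ?_⟩
    rw [haEq _ (by omega)]
    have hc : ((x.toNat - 1 : ℕ) : ℤ) + 1 = x := by omega
    rw [hc]
    ring
end
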